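/- arXiv:2401.02471 — 8 statements merged into one kernel-verified Lean document; each statement's English description precedes it below -/
import Mathlib

section
/- The sensor network localization game is an exact potential game with potential function Φ: for every i ∈ S, every position profile x : S → ℝⁿ and every y ∈ ℝⁿ, Φ(y, x_{-i}) − Φ(x) = J_i(y, x_{-i}) − J_i(x), where (y, x_{-i}) denotes the profile x with its i-th component replaced by y. -/
open scoped BigOperators

/-- The sensor network localization game is an exact potential
game with potential function `Φ`. -/
theorem stmt_1
    (n : ℕ) (hn : 1 ≤ n)
    (S A : Type) [Fintype S] [DecidableEq S] [Fintype A] [DecidableEq A]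
    (a : A → EuclideanSpace ℝ (Fin n))
    (Ess : Finset (S × S))
    (hsym : ∀ i j : S, (i, j) ∈ Ess → (j, i) ∈ Ess)
    (hirr : ∀ i : S, (i, i) ∉ Ess)
    (U : Finset (S × S)) (hUsub : U ⊆ Ess)
    (hUone : ∀ i j : S, (i, j) ∈ Ess → ((i, j) ∈ U ↔ (j, i) ∉ U))
    (Eas : Finset (S × A))
    (d : S → S → ℝ) (hd : ∀ i j, d i j = d j i)
    (e : S → A → ℝ)
    (Φ : (S → EuclideanSpace ℝ (Fin n)) → ℝ)
    (hΦ : ∀ x, Φ x =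
      (∑ p ∈ U, (‖x p.1 - x p.2‖ ^ 2 - d p.1 p.2 ^ 2) ^ 2)
        + ∑ q ∈ Eas, (‖x q.1 - a q.2‖ ^ 2 - e q.1 q.2 ^ 2) ^ 2)
    (J : S → (S → EuclideanSpace ℝ (Fin n)) → ℝ)
    (hJ : ∀ i x, J i x =
      (∑ j ∈ Finset.univ.filter (fun j => (i, j) ∈ Ess),
        (‖x i - x j‖ ^ 2 - d i j ^ 2) ^ 2)
        + ∑ l ∈ Finset.univ.filter (fun l => (i, l) ∈ Eas),
            (‖x i - a l‖ ^ 2 - e i l ^ 2) ^ 2) :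
    ∀ (i : S) (x : S → EuclideanSpace ℝ (Fin n)) (y : EuclideanSpace ℝ (Fin n)),
      Φ (Function.update x i y) - Φ x
        = J i (Function.update x i y) - J i x := by
  intro i x y
  -- bijection for the sensor-sensor part
  have hbij : ∀ z : S → EuclideanSpace ℝ (Fin n),
      ∑ p ∈ U.filter (fun p => p.1 = i ∨ p.2 = i),
        (‖z p.1 - z p.2‖ ^ 2 - d p.1 p.2 ^ 2) ^ 2
      = ∑ j ∈ Finset.univ.filter (fun j => (i, j) ∈ Ess),
        (‖z i - z j‖ ^ 2 - d i j ^ 2) ^ 2 := by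
    intro z
    refine Finset.sum_nbij' (fun p => if p.1 = i then p.2 else p.1)
      (fun j => if (i, j) ∈ U then (i, j) else (j, i)) ?_ ?_ ?_ ?_ ?_
    · rintro ⟨p1, p2⟩ hp
      simp only [Finset.mem_filter] at hp ⊢
      obtain ⟨hpU, hpi⟩ := hp
      refine ⟨Finset.mem_univ _, ?_⟩
      by_cases h1 : p1 = i
      · rw [if_pos h1, ← h1]
        exact hUsub hpU
      · rw [if_neg h1]
        have h2 : p2 = i := by tauto
        rw [h2] at hpU
        exact hsym _ _ (hUsub hpU)
    · intro j hj
      simp only [Finset.mem_filter, Finset.mem_univ, true_and] at hj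
      by_cases h : (i, j) ∈ U
      · rw [if_pos h]
        simp [Finset.mem_filter, h]
      · rw [if_neg h]
        have hji : (j, i) ∈ U := (hUone j i (hsym _ _ hj)).mpr h
        simp [Finset.mem_filter, hji]
    · rintro ⟨p1, p2⟩ hp
      simp only [Finset.mem_filter] at hp
      obtain ⟨hpU, hpi⟩ := hp
      dsimp only
      by_cases h1 : p1 = i
      · have hpU' : (i, p2) ∈ U := h1 ▸ hpU
        simp [h1, hpU']
      · have h2 : p2 = i := by tauto
        have hpU' : (p1, i) ∈ U := h2 ▸ hpU
        have hEss : (i, p1) ∈ Ess := hsym _ _ (hUsub hpU')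
        have hnot : (i, p1) ∉ U := fun hc => ((hUone i p1 hEss).mp hc) hpU'
        simp [h1, h2, hnot]
    · intro j hj
      simp only [Finset.mem_filter, Finset.mem_univ, true_and] at hj
      have hji : j ≠ i := by
        intro hc; rw [hc] at hj; exact hirr i hj
      by_cases h : (i, j) ∈ U
      · simp [h]
      · simp [h, hji]
    · rintro ⟨p1, p2⟩ hp
      simp only [Finset.mem_filter] at hp
      obtain ⟨hpU, hpi⟩ := hp
      dsimp only
      by_cases h1 : p1 = i
      · rw [if_pos h1, h1]
      · have h2 : p2 = i := by tauto
        rw [if_neg h1, h2, norm_sub_rev, hd p1 i]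
  -- bijection for the anchor part
  have hbij2 : ∀ z : S → EuclideanSpace ℝ (Fin n),
      ∑ q ∈ Eas.filter (fun q => q.1 = i),
        (‖z q.1 - a q.2‖ ^ 2 - e q.1 q.2 ^ 2) ^ 2
      = ∑ l ∈ Finset.univ.filter (fun l => (i, l) ∈ Eas),
        (‖z i - a l‖ ^ 2 - e i l ^ 2) ^ 2 := by
    intro z
    refine Finset.sum_nbij' (fun q => q.2) (fun l => (i, l)) ?_ ?_ ?_ ?_ ?_
    · intro q hq
      simp only [Finset.mem_filter] at hq
      obtain ⟨h1, h2⟩ := hq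
      simp only [Finset.mem_filter, Finset.mem_univ, true_and]
      rw [show (i, q.2) = q from by rw [← h2]]
      exact h1
    · intro l hl
      simp only [Finset.mem_filter, Finset.mem_univ, true_and] at hl
      simp [Finset.mem_filter, hl]
    · intro q hq
      simp only [Finset.mem_filter] at hq
      rw [← hq.2]
    · intro l _; rfl
    · intro q hq
      simp only [Finset.mem_filter] at hq
      rw [hq.2]
  -- decomposition of Φ
  have hdec : ∀ z : S → EuclideanSpace ℝ (Fin n),
      Φ z = J i z
        + ((∑ p ∈ U.filter (fun p => ¬(p.1 = i ∨ p.2 = i)),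
              (‖z p.1 - z p.2‖ ^ 2 - d p.1 p.2 ^ 2) ^ 2)
          + ∑ q ∈ Eas.filter (fun q => ¬ q.1 = i),
              (‖z q.1 - a q.2‖ ^ 2 - e q.1 q.2 ^ 2) ^ 2) := by
    intro z
    rw [hΦ, hJ,
      ← Finset.sum_filter_add_sum_filter_not U (fun p => p.1 = i ∨ p.2 = i),
      ← Finset.sum_filter_add_sum_filter_not Eas (fun q => q.1 = i),
      hbij z, hbij2 z]
    ring
  have hrest1 :
      ∑ p ∈ U.filter (fun p => ¬(p.1 = i ∨ p.2 = i)),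
        (‖Function.update x i y p.1 - Function.update x i y p.2‖ ^ 2 - d p.1 p.2 ^ 2) ^ 2
      = ∑ p ∈ U.filter (fun p => ¬(p.1 = i ∨ p.2 = i)),
        (‖x p.1 - x p.2‖ ^ 2 - d p.1 p.2 ^ 2) ^ 2 := by
    refine Finset.sum_congr rfl ?_
    intro p hp
    simp only [Finset.mem_filter, not_or] at hp
    rw [Function.update_of_ne hp.2.1, Function.update_of_ne hp.2.2]
  have hrest2 :
      ∑ q ∈ Eas.filter (fun q => ¬ q.1 = i),
        (‖Function.update x i y q.1 - a q.2‖ ^ 2 - e q.1 q.2 ^ 2) ^ 2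
      = ∑ q ∈ Eas.filter (fun q => ¬ q.1 = i),
        (‖x q.1 - a q.2‖ ^ 2 - e q.1 q.2 ^ 2) ^ 2 := by
    refine Finset.sum_congr rfl ?_
    intro q hq
    simp only [Finset.mem_filter] at hq
    rw [Function.update_of_ne hq.2]
  rw [hdec (Function.update x i y), hdec x, hrest1, hrest2]
  ring
end

section
/- For every i ∈ S and every position profile x : S → ℝⁿ, the Fréchet derivative at x_i of the map y ↦ Φ(y, x_{-i}) equals the Fréchet derivative at x_i of the map y ↦ J_i(y, x_{-i}) (both maps from ℝⁿ to ℝ), where (y, x_{-i}) denotes the profile x with its i-th component replaced by y. -/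
open scoped BigOperators

/-- For every player `i` and every profile `x`, the Fréchet
derivative at `x i` of `y ↦ Φ(y, x_{-i})` equals that of `y ↦ J_i(y, x_{-i})`. -/
theorem stmt_2
    (n : ℕ) (hn : 1 ≤ n)
    (S A : Type) [Fintype S] [DecidableEq S] [Fintype A] [DecidableEq A]
    (a : A → EuclideanSpace ℝ (Fin n))
    (Ess : Finset (S × S))
    (hsym : ∀ i j : S, (i, j) ∈ Ess → (j, i) ∈ Ess)
    (hirr : ∀ i : S, (i, i) ∉ Ess)
    (U : Finset (S × S)) (hUsub : U ⊆ Ess)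
    (hUone : ∀ i j : S, (i, j) ∈ Ess → ((i, j) ∈ U ↔ (j, i) ∉ U))
    (Eas : Finset (S × A))
    (d : S → S → ℝ) (hd : ∀ i j, d i j = d j i)
    (e : S → A → ℝ)
    (Φ : (S → EuclideanSpace ℝ (Fin n)) → ℝ)
    (hΦ : ∀ x, Φ x =
      (∑ p ∈ U, (‖x p.1 - x p.2‖ ^ 2 - d p.1 p.2 ^ 2) ^ 2)
        + ∑ q ∈ Eas, (‖x q.1 - a q.2‖ ^ 2 - e q.1 q.2 ^ 2) ^ 2)
    (J : S → (S → EuclideanSpace ℝ (Fin n)) → ℝ)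
    (hJ : ∀ i x, J i x =
      (∑ j ∈ Finset.univ.filter (fun j => (i, j) ∈ Ess),
        (‖x i - x j‖ ^ 2 - d i j ^ 2) ^ 2)
        + ∑ l ∈ Finset.univ.filter (fun l => (i, l) ∈ Eas),
            (‖x i - a l‖ ^ 2 - e i l ^ 2) ^ 2) :
    ∀ (i : S) (x : S → EuclideanSpace ℝ (Fin n)),
      fderiv ℝ (fun y => Φ (Function.update x i y)) (x i)
        = fderiv ℝ (fun y => J i (Function.update x i y)) (x i) := by
  intro i x
  set C : ℝ :=
    (∑ p ∈ U.filter (fun p => ¬(p.1 = i ∨ p.2 = i)),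
        (‖x p.1 - x p.2‖ ^ 2 - d p.1 p.2 ^ 2) ^ 2)
      + ∑ q ∈ Eas.filter (fun q => ¬ q.1 = i),
          (‖x q.1 - a q.2‖ ^ 2 - e q.1 q.2 ^ 2) ^ 2 with hC
  have key : ∀ y, Φ (Function.update x i y) = J i (Function.update x i y) + C := by
    intro y
    rw [hΦ, hJ, hC]
    rw [← Finset.sum_filter_add_sum_filter_not U (fun p => p.1 = i ∨ p.2 = i),
        ← Finset.sum_filter_add_sum_filter_not Eas (fun q => q.1 = i)]
    have hA : (∑ p ∈ U.filter (fun p => p.1 = i ∨ p.2 = i),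
        (‖Function.update x i y p.1 - Function.update x i y p.2‖ ^ 2 - d p.1 p.2 ^ 2) ^ 2)
        = ∑ j ∈ Finset.univ.filter (fun j => (i, j) ∈ Ess),
          (‖Function.update x i y i - Function.update x i y j‖ ^ 2 - d i j ^ 2) ^ 2 := by
      refine Finset.sum_bij' (fun p _ => if p.1 = i then p.2 else p.1)
        (fun j _ => if (i, j) ∈ U then (i, j) else (j, i)) ?_ ?_ ?_ ?_ ?_
      · intro p hp
        simp only [Finset.mem_filter, Finset.mem_univ, true_and] at hp ⊢
        obtain ⟨hpU, hcase⟩ := hp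
        have hpE := hUsub hpU
        by_cases h1 : p.1 = i
        · rw [show (if p.1 = i then p.2 else p.1) = p.2 from if_pos h1]
          have hpe : ((i : S), p.2) = p := Prod.ext h1.symm rfl
          rwa [hpe]
        · rw [show (if p.1 = i then p.2 else p.1) = p.1 from if_neg h1]
          have h2 : p.2 = i := by tauto
          have hpe : (p.1, (i : S)) = p := Prod.ext rfl h2.symm
          have hpE' : (p.1, (i : S)) ∈ Ess := by rw [hpe]; exact hpE
          exact hsym _ _ hpE'
      · intro j hj
        simp only [Finset.mem_filter, Finset.mem_univ, true_and] at hj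
        by_cases hU : (i, j) ∈ U
        · simp [hU]
        · have hU' : (j, i) ∈ U := by
            by_contra hU'
            exact hU ((hUone i j hj).mpr hU')
          simp [hU, hU']
      · intro p hp
        simp only [Finset.mem_filter] at hp
        obtain ⟨hpU, hcase⟩ := hp
        by_cases h1 : p.1 = i
        · have hpe : ((i : S), p.2) = p := Prod.ext h1.symm rfl
          have hpU' : ((i : S), p.2) ∈ U := by rw [hpe]; exact hpU
          rw [show (if p.1 = i then p.2 else p.1) = p.2 from if_pos h1, if_pos hpU']
          exact hpe
        · have h2 : p.2 = i := by tauto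
          have hpe : (p.1, (i : S)) = p := Prod.ext rfl h2.symm
          have hpU' : (p.1, (i : S)) ∈ U := by rw [hpe]; exact hpU
          have hpE : (i, p.1) ∈ Ess := hsym _ _ (hUsub hpU')
          have hnotU : (i, p.1) ∉ U := fun h => (hUone i p.1 hpE).mp h hpU'
          rw [show (if p.1 = i then p.2 else p.1) = p.1 from if_neg h1, if_neg hnotU]
          exact hpe
      · intro j hj
        simp only [Finset.mem_filter, Finset.mem_univ, true_and] at hj
        by_cases hU : (i, j) ∈ U
        · simp [hU]
        · have hji : j ≠ i := fun h => hirr i (h ▸ hj)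
          simp [hU, hji]
      · intro p hp
        simp only [Finset.mem_filter] at hp
        obtain ⟨hpU, hcase⟩ := hp
        have hpE := hUsub hpU
        have hne : p.1 ≠ p.2 := by
          intro h
          apply hirr p.1
          have hpe : (p.1, p.1) = p := Prod.ext rfl h
          rw [hpe]
          exact hpE
        by_cases h1 : p.1 = i
        · have h2 : p.2 ≠ i := fun h => hne (h1.trans h.symm)
          rw [show (if p.1 = i then p.2 else p.1) = p.2 from if_pos h1, h1,
            Function.update_self, Function.update_of_ne h2]
        · have h2 : p.2 = i := by tauto
          rw [show (if p.1 = i then p.2 else p.1) = p.1 from if_neg h1,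
            Function.update_of_ne h1, h2, Function.update_self, norm_sub_rev, hd]
    have hB : (∑ q ∈ Eas.filter (fun q => q.1 = i),
        (‖Function.update x i y q.1 - a q.2‖ ^ 2 - e q.1 q.2 ^ 2) ^ 2)
        = ∑ l ∈ Finset.univ.filter (fun l => (i, l) ∈ Eas),
          (‖Function.update x i y i - a l‖ ^ 2 - e i l ^ 2) ^ 2 := by
      refine Finset.sum_bij' (fun q _ => q.2) (fun l _ => (i, l)) ?_ ?_ ?_ ?_ ?_
      · intro q hq
        simp only [Finset.mem_filter, Finset.mem_univ, true_and] at hq ⊢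
        obtain ⟨hq1, hq2⟩ := hq
        have : ((i : S), q.2) = q := by rw [← hq2]
        rwa [this]
      · intro l hl
        simp only [Finset.mem_filter, Finset.mem_univ, true_and] at hl
        simp only [Finset.mem_filter]
        exact ⟨hl, trivial⟩
      · intro q hq
        simp only [Finset.mem_filter] at hq
        exact Prod.ext hq.2.symm rfl
      · intro l hl; rfl
      · intro q hq
        simp only [Finset.mem_filter] at hq
        rw [hq.2]
    have hCongr1 : (∑ p ∈ U.filter (fun p => ¬(p.1 = i ∨ p.2 = i)),
        (‖Function.update x i y p.1 - Function.update x i y p.2‖ ^ 2 - d p.1 p.2 ^ 2) ^ 2)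
        = ∑ p ∈ U.filter (fun p => ¬(p.1 = i ∨ p.2 = i)),
          (‖x p.1 - x p.2‖ ^ 2 - d p.1 p.2 ^ 2) ^ 2 := by
      refine Finset.sum_congr rfl fun p hp => ?_
      simp only [Finset.mem_filter, not_or] at hp
      rw [Function.update_of_ne hp.2.1, Function.update_of_ne hp.2.2]
    have hCongr2 : (∑ q ∈ Eas.filter (fun q => ¬ q.1 = i),
        (‖Function.update x i y q.1 - a q.2‖ ^ 2 - e q.1 q.2 ^ 2) ^ 2)
        = ∑ q ∈ Eas.filter (fun q => ¬ q.1 = i),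
          (‖x q.1 - a q.2‖ ^ 2 - e q.1 q.2 ^ 2) ^ 2 := by
      refine Finset.sum_congr rfl fun q hq => ?_
      simp only [Finset.mem_filter] at hq
      rw [Function.update_of_ne hq.2]
    rw [hA, hB, hCongr1, hCongr2]
    ring
  have hfun : (fun y => Φ (Function.update x i y))
      = fun y => J i (Function.update x i y) + C := funext key
  rw [hfun, fderiv_add_const]
end

section
/- Sufficiency direction of the canonical duality characterization (Theorem 1/Corollary 1): let Ω_i ⊆ ℝⁿ be nonempty sets with Ω = ∏_{i∈S} Ω_i, let x⋄ ∈ Ω, and let σ⋄ be a dual variable all of whose components are nonnegative, such that (i) the duality relation holds at (x⋄, σ⋄), i.e., σ⋄^s_{ij} = 2(‖x⋄_i − x⋄_j‖² − d_{ij}²) for all (i,j) ∈ U and σ⋄^a_{il} = 2(‖x⋄_i − a_l‖² − e_{il}²) for all (i,l) ∈ E_as, and (ii) the first-order condition Σ_{i∈S} ⟨∇_{x_i}Γ(x⋄, σ⋄), x_i − x⋄_i⟩ ≥ 0 holds for every x ∈ Ω. Then Φ(x⋄) ≤ Φ(x) for all x ∈ Ω, and x⋄ is a global Nash equilibrium: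 for every i ∈ S and every y ∈ Ω_i, J_i(x⋄) ≤ J_i(y, x⋄_{-i}). -/
open scoped BigOperators RealInnerProductSpace

lemma key_ineq {n : ℕ} (u u0 : EuclideanSpace ℝ (Fin n)) (dd σ : ℝ)
    (hσ : σ = 2 * (‖u0‖ ^ 2 - dd)) (h0 : 0 ≤ σ) :
    σ * (2 * ⟪u0, u - u0⟫) ≤ (‖u‖ ^ 2 - dd) ^ 2 - (‖u0‖ ^ 2 - dd) ^ 2 := by
  have hnorm : ‖u‖ ^ 2 = ‖u0‖ ^ 2 + 2 * ⟪u0, u - u0⟫ + ‖u - u0‖ ^ 2 := by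
    have h := norm_add_sq_real u0 (u - u0)
    rw [add_sub_cancel] at h
    linarith
  nlinarith [sq_nonneg (2 * ⟪u0, u - u0⟫ + ‖u - u0‖ ^ 2), sq_nonneg (‖u - u0‖),
    mul_nonneg h0 (sq_nonneg (‖u - u0‖))]

lemma sum_pairs {S T : Type} [Fintype S] [Fintype T] [DecidableEq S] [DecidableEq T]
    (E : Finset (S × T)) (g : S × T → ℝ) :
    ∑ p ∈ E, g p = ∑ i : S, ∑ j ∈ Finset.univ.filter (fun j => (i, j) ∈ E), g (i, j) := by
  have h1 : ∀ i : S, ∑ j ∈ Finset.univ.filter (fun j => (i, j) ∈ E), g (i, j)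
      = ∑ j : T, if (i, j) ∈ E then g (i, j) else 0 := by
    intro i; rw [Finset.sum_filter]
  simp_rw [h1]
  rw [← Finset.sum_product']
  rw [Finset.univ_product_univ]
  rw [Finset.sum_ite_mem, Finset.univ_inter]

/-- Sufficiency direction of the canonical duality
characterization (Theorem 1 / Corollary 1): if the duality relation holds at
`(x⋄, σ⋄)` with `σ⋄ ≥ 0` and the first-order condition holds on `Ω`, then `x⋄`
is a global minimizer of `Φ` over `Ω` and a global Nash equilibrium. -/
theorem stmt_10
    (n : ℕ) (hn : 1 ≤ n)
    (S A : Type) [Fintype S] [DecidableEq S] [Fintype A] [DecidableEq A]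
    (a : A → EuclideanSpace ℝ (Fin n))
    (Ess : Finset (S × S))
    (hsym : ∀ i j : S, (i, j) ∈ Ess → (j, i) ∈ Ess)
    (hirr : ∀ i : S, (i, i) ∉ Ess)
    (U : Finset (S × S)) (hUsub : U ⊆ Ess)
    (hUone : ∀ i j : S, (i, j) ∈ Ess → ((i, j) ∈ U ↔ (j, i) ∉ U))
    (Eas : Finset (S × A))
    (d : S → S → ℝ) (hd : ∀ i j, d i j = d j i)
    (e : S → A → ℝ)
    (Φ : (S → EuclideanSpace ℝ (Fin n)) → ℝ)
    (hΦ : ∀ x, Φ x =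
      (∑ p ∈ U, (‖x p.1 - x p.2‖ ^ 2 - d p.1 p.2 ^ 2) ^ 2)
        + ∑ q ∈ Eas, (‖x q.1 - a q.2‖ ^ 2 - e q.1 q.2 ^ 2) ^ 2)
    (J : S → (S → EuclideanSpace ℝ (Fin n)) → ℝ)
    (hJ : ∀ i x, J i x =
      (∑ j ∈ Finset.univ.filter (fun j => (i, j) ∈ Ess),
        (‖x i - x j‖ ^ 2 - d i j ^ 2) ^ 2)
        + ∑ l ∈ Finset.univ.filter (fun l => (i, l) ∈ Eas),
            (‖x i - a l‖ ^ 2 - e i l ^ 2) ^ 2)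
    (Ω : S → Set (EuclideanSpace ℝ (Fin n)))
    (hΩne : ∀ i, (Ω i).Nonempty)
    (xd : S → EuclideanSpace ℝ (Fin n))
    (hxd : ∀ i, xd i ∈ Ω i)
    (σs : S × S → ℝ) (σa : S × A → ℝ)
    (hσs0 : ∀ p ∈ U, 0 ≤ σs p) (hσa0 : ∀ q ∈ Eas, 0 ≤ σa q)
    (hdual_s : ∀ p ∈ U, σs p = 2 * (‖xd p.1 - xd p.2‖ ^ 2 - d p.1 p.2 ^ 2))
    (hdual_a : ∀ q ∈ Eas, σa q = 2 * (‖xd q.1 - a q.2‖ ^ 2 - e q.1 q.2 ^ 2))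
    (hFO : ∀ x : S → EuclideanSpace ℝ (Fin n), (∀ i, x i ∈ Ω i) →
      0 ≤ ∑ i : S,
        ⟪(∑ j ∈ Finset.univ.filter (fun j => (i, j) ∈ Ess),
            (2 * (if (i, j) ∈ U then σs (i, j) else σs (j, i))) • (xd i - xd j))
          + ∑ l ∈ Finset.univ.filter (fun l => (i, l) ∈ Eas),
              (2 * σa (i, l)) • (xd i - a l),
          x i - xd i⟫) :
    (∀ x : S → EuclideanSpace ℝ (Fin n), (∀ i, x i ∈ Ω i) → Φ xd ≤ Φ x) ∧
    (∀ i : S, ∀ y ∈ Ω i, J i xd ≤ J i (Function.update xd i y)) := by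
  classical
  have hUmem : ∀ p ∈ U, (p.2, p.1) ∉ U := fun p hp => (hUone p.1 p.2 (hUsub hp)).1 hp
  have hEss_eq : Ess = U ∪ U.image (fun p => (p.2, p.1)) := by
    ext p
    simp only [Finset.mem_union, Finset.mem_image]
    constructor
    · intro hp
      by_cases h : p ∈ U
      · exact Or.inl h
      · refine Or.inr ⟨(p.2, p.1), ?_, rfl⟩
        by_contra h2
        exact h ((hUone p.1 p.2 hp).2 h2)
    · rintro (h | ⟨q, hq, rfl⟩)
      · exact hUsub h
      · exact hsym q.1 q.2 (hUsub hq)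
  have hdisj : Disjoint U (U.image (fun p => (p.2, p.1))) := by
    rw [Finset.disjoint_left]
    rintro p hp hp2
    obtain ⟨q, hq, hqp⟩ := Finset.mem_image.mp hp2
    have hq' : q = (p.2, p.1) := by rw [← hqp]
    exact hUmem p hp (hq' ▸ hq)
  have hUsplit : ∀ g : S × S → ℝ, ∑ p ∈ Ess, g p = ∑ p ∈ U, (g p + g (p.2, p.1)) := by
    intro g
    rw [hEss_eq, Finset.sum_union hdisj,
      Finset.sum_image (fun x _ y _ hxy =>
        Prod.ext (congrArg Prod.snd hxy) (congrArg Prod.fst hxy)),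
      ← Finset.sum_add_distrib]
  have hmain : ∀ x : S → EuclideanSpace ℝ (Fin n), (∀ i, x i ∈ Ω i) → Φ xd ≤ Φ x := by
    intro x hx
    have hFOx := hFO x hx
    set G : S × S → ℝ := fun p =>
      2 * (if p ∈ U then σs p else σs (p.2, p.1)) * ⟪xd p.1 - xd p.2, x p.1 - xd p.1⟫ with hG
    set H : S × A → ℝ := fun q =>
      2 * σa q * ⟪xd q.1 - a q.2, x q.1 - xd q.1⟫ with hH
    have hsplitinner : ∀ i : S,
        ⟪(∑ j ∈ Finset.univ.filter (fun j => (i, j) ∈ Ess),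
            (2 * (if (i, j) ∈ U then σs (i, j) else σs (j, i))) • (xd i - xd j))
          + ∑ l ∈ Finset.univ.filter (fun l => (i, l) ∈ Eas),
              (2 * σa (i, l)) • (xd i - a l), x i - xd i⟫
        = (∑ j ∈ Finset.univ.filter (fun j => (i, j) ∈ Ess), G (i, j))
          + ∑ l ∈ Finset.univ.filter (fun l => (i, l) ∈ Eas), H (i, l) := by
      intro i
      simp only [hG, hH]
      rw [inner_add_left, sum_inner, sum_inner]
      simp_rw [real_inner_smul_left]
    rw [Finset.sum_congr rfl (fun i _ => hsplitinner i), Finset.sum_add_distrib,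
      ← sum_pairs Ess G, ← sum_pairs Eas H, hUsplit G] at hFOx
    have hterm : ∀ p ∈ U, G p + G (p.2, p.1)
        ≤ (‖x p.1 - x p.2‖ ^ 2 - d p.1 p.2 ^ 2) ^ 2
          - (‖xd p.1 - xd p.2‖ ^ 2 - d p.1 p.2 ^ 2) ^ 2 := by
      intro p hp
      have h1 : G p + G (p.2, p.1)
          = σs p * (2 * ⟪xd p.1 - xd p.2, (x p.1 - x p.2) - (xd p.1 - xd p.2)⟫) := by
        simp only [hG, if_pos hp, if_neg (hUmem p hp), inner_sub_left, inner_sub_right]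
        ring
      rw [h1]
      exact key_ineq _ _ _ _ (hdual_s p hp) (hσs0 p hp)
    have hterma : ∀ q ∈ Eas, H q
        ≤ (‖x q.1 - a q.2‖ ^ 2 - e q.1 q.2 ^ 2) ^ 2
          - (‖xd q.1 - a q.2‖ ^ 2 - e q.1 q.2 ^ 2) ^ 2 := by
      intro q hq
      have h1 : H q = σa q * (2 * ⟪xd q.1 - a q.2, (x q.1 - a q.2) - (xd q.1 - a q.2)⟫) := by
        simp only [hH]
        rw [sub_sub_sub_cancel_right]
        ring
      rw [h1]
      exact key_ineq _ _ _ _ (hdual_a q hq) (hσa0 q hq)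
    have hs1 := Finset.sum_le_sum hterm
    have hs2 := Finset.sum_le_sum hterma
    rw [Finset.sum_sub_distrib] at hs1 hs2
    rw [hΦ x, hΦ xd]
    linarith
  refine ⟨hmain, ?_⟩
  intro i y hy
  set x' := Function.update xd i y with hx'def
  have hx' : ∀ k, x' k ∈ Ω k := by
    intro k
    by_cases h : k = i
    · subst h; simpa [hx'def] using hy
    · simpa [hx'def, Function.update_of_ne h] using hxd k
  have hΦle := hmain x' hx'
  set Te : S × S → ℝ := fun p =>
    (‖x' p.1 - x' p.2‖ ^ 2 - d p.1 p.2 ^ 2) ^ 2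
      - (‖xd p.1 - xd p.2‖ ^ 2 - d p.1 p.2 ^ 2) ^ 2 with hTe
  set Ta : S × A → ℝ := fun q =>
    (‖x' q.1 - a q.2‖ ^ 2 - e q.1 q.2 ^ 2) ^ 2
      - (‖xd q.1 - a q.2‖ ^ 2 - e q.1 q.2 ^ 2) ^ 2 with hTa
  have hTesym : ∀ p : S × S, Te (p.2, p.1) = Te p := by
    intro p
    simp only [hTe]
    rw [norm_sub_rev (x' p.2), norm_sub_rev (xd p.2), ← hd p.1 p.2]
  have hTe0 : ∀ p : S × S, p.1 ≠ i → p.2 ≠ i → Te p = 0 := by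
    intro p h1 h2
    simp only [hTe, hx'def, Function.update_of_ne h1, Function.update_of_ne h2]
    ring
  have hTa0 : ∀ q : S × A, q.1 ≠ i → Ta q = 0 := by
    intro q h1
    simp only [hTa, hx'def, Function.update_of_ne h1]
    ring
  have hA : ∑ p ∈ Ess, Te p = 2 * ∑ p ∈ U, Te p := by
    rw [hUsplit Te, Finset.mul_sum]
    refine Finset.sum_congr rfl fun p _ => ?_
    rw [hTesym]; ring
  have hdisj2 : Disjoint (Ess.filter (fun p => p.1 = i)) (Ess.filter (fun p => p.2 = i)) := by
    rw [Finset.disjoint_left]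
    intro p hp1 hp2
    have h1 := (Finset.mem_filter.mp hp1).2
    have h2 := (Finset.mem_filter.mp hp2).2
    have hpE := (Finset.mem_filter.mp hp1).1
    have : p = (i, i) := Prod.ext h1 h2
    exact hirr i (this ▸ hpE)
  have hP12 : ∑ p ∈ Ess, Te p
      = ∑ p ∈ Ess.filter (fun p => p.1 = i), Te p
        + ∑ p ∈ Ess.filter (fun p => p.2 = i), Te p := by
    rw [← Finset.sum_union hdisj2]
    refine (Finset.sum_subset ?_ ?_).symm
    · exact Finset.union_subset (Finset.filter_subset _ _) (Finset.filter_subset _ _)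
    · intro p hp hnp
      simp only [Finset.mem_union, Finset.mem_filter, not_or, not_and] at hnp
      exact hTe0 p (hnp.1 hp) (hnp.2 hp)
  have hPa : ∑ p ∈ Ess.filter (fun p => p.2 = i), Te p
      = ∑ p ∈ Ess.filter (fun p => p.1 = i), Te p := by
    refine Finset.sum_nbij' (fun p => (p.2, p.1)) (fun p => (p.2, p.1)) ?_ ?_ ?_ ?_ ?_
    · intro p hp
      obtain ⟨hpE, hp2⟩ := Finset.mem_filter.mp hp
      exact Finset.mem_filter.mpr ⟨hsym p.1 p.2 hpE, hp2⟩
    · intro p hp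
      obtain ⟨hpE, hp1⟩ := Finset.mem_filter.mp hp
      exact Finset.mem_filter.mpr ⟨hsym p.1 p.2 hpE, hp1⟩
    · intro p _; rfl
    · intro p _; rfl
    · intro p _; rw [hTesym]
  have hPb : ∑ p ∈ Ess.filter (fun p => p.1 = i), Te p
      = ∑ j ∈ Finset.univ.filter (fun j => (i, j) ∈ Ess), Te (i, j) := by
    refine Finset.sum_nbij' (fun p => p.2) (fun j => (i, j)) ?_ ?_ ?_ ?_ ?_
    · intro p hp
      obtain ⟨hpE, hp1⟩ := Finset.mem_filter.mp hp
      refine Finset.mem_filter.mpr ⟨Finset.mem_univ _, ?_⟩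
      rwa [← hp1]
    · intro j hj
      exact Finset.mem_filter.mpr ⟨(Finset.mem_filter.mp hj).2, rfl⟩
    · intro p hp
      obtain ⟨_, hp1⟩ := Finset.mem_filter.mp hp
      exact Prod.ext hp1.symm rfl
    · intro j _; rfl
    · intro p hp
      obtain ⟨_, hp1⟩ := Finset.mem_filter.mp hp
      rw [← hp1]
  have hQa : ∑ q ∈ Eas, Ta q
      = ∑ l ∈ Finset.univ.filter (fun l => (i, l) ∈ Eas), Ta (i, l) := by
    have h1 : ∑ q ∈ Eas, Ta q = ∑ q ∈ Eas.filter (fun q => q.1 = i), Ta q := by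
      refine (Finset.sum_subset (Finset.filter_subset _ _) ?_).symm
      intro q hq hnq
      simp only [Finset.mem_filter, not_and] at hnq
      exact hTa0 q (hnq hq)
    rw [h1]
    refine Finset.sum_nbij' (fun q => q.2) (fun l => (i, l)) ?_ ?_ ?_ ?_ ?_
    · intro q hq
      obtain ⟨hqE, hq1⟩ := Finset.mem_filter.mp hq
      refine Finset.mem_filter.mpr ⟨Finset.mem_univ _, ?_⟩
      rwa [← hq1]
    · intro l hl
      exact Finset.mem_filter.mpr ⟨(Finset.mem_filter.mp hl).2, rfl⟩
    · intro q hq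
      obtain ⟨_, hq1⟩ := Finset.mem_filter.mp hq
      exact Prod.ext hq1.symm rfl
    · intro l _; rfl
    · intro q hq
      obtain ⟨_, hq1⟩ := Finset.mem_filter.mp hq
      rw [← hq1]
  have hΦdiff : Φ x' - Φ xd = ∑ p ∈ U, Te p + ∑ q ∈ Eas, Ta q := by
    rw [hΦ x', hΦ xd]
    simp only [hTe, hTa, Finset.sum_sub_distrib]
    ring
  have hJdiff : J i x' - J i xd
      = (∑ j ∈ Finset.univ.filter (fun j => (i, j) ∈ Ess), Te (i, j))
        + ∑ l ∈ Finset.univ.filter (fun l => (i, l) ∈ Eas), Ta (i, l) := by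
    rw [hJ i x', hJ i xd]
    simp only [hTe, hTa, Finset.sum_sub_distrib]
    ring
  have hEssTe : ∑ p ∈ Ess, Te p
      = 2 * ∑ j ∈ Finset.univ.filter (fun j => (i, j) ∈ Ess), Te (i, j) := by
    rw [hP12, hPa, hPb]; ring
  linarith
end

section
/- Duality-gap inequality for the pseudo-gradient of Γ: for every pair (x, σ) with all components of σ nonnegative, and for every pair (x⋄, σ⋄), one has Σ_{i∈S} ⟨∇_{x_i}Γ(x, σ), x⋄_i − x_i⟩ − ⟨∇_σΓ(x, σ), σ⋄ − σ⟩ ≤ Γ(x⋄, σ) − Γ(x, σ⋄). -/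
open scoped BigOperators RealInnerProductSpace

/-!
Each summand of `Γ` has the form `s (‖v‖² - c) - s² / 4` with `v` affine in `x`: it is convex in
`v` when `s ≥ 0` and concave in `s`. The two first-order inequalities (convexity in `x` at fixed
`σ`, concavity in `σ` at fixed `x`) add up to the claimed one edge by edge. The node-wise gradient
meets each edge of `U` once from each endpoint, and the two contributions combine into the
derivative of `‖x_i - x_j‖²` in the direction `x⋄ - x`.
-/

open Finset

theorem sum_sum_filter_mem {α β M : Type*} [Fintype α] [Fintype β] [DecidableEq α]
    [DecidableEq β] [AddCommMonoid M] (s : Finset (α × β)) (f : α × β → M) :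
    ∑ i, ∑ j ∈ univ.filter (fun j => (i, j) ∈ s), f (i, j) = ∑ p ∈ s, f p :=
  (sum_finset_product s univ (fun i => univ.filter (fun j => (i, j) ∈ s)) (by simp)).symm

theorem sum_eq_sum_add_swap_of_orientation {α M : Type*} [DecidableEq α] [AddCommMonoid M]
    {E U : Finset (α × α)} (hsym : ∀ i j, (i, j) ∈ E → (j, i) ∈ E) (hUsub : U ⊆ E)
    (hUone : ∀ i j, (i, j) ∈ E → ((i, j) ∈ U ↔ (j, i) ∉ U)) (f : α × α → M) :
    ∑ p ∈ E, f p = ∑ p ∈ U, (f p + f p.swap) := by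
  have hswap : ∀ p ∈ U, p.swap ∉ U := fun p hp => (hUone p.1 p.2 (hUsub hp)).mp hp
  have hE : E = U ∪ U.image Prod.swap := by
    ext p
    constructor
    · intro hp
      by_cases h : p ∈ U
      · exact mem_union_left _ h
      · refine mem_union_right _ (mem_image.mpr ⟨p.swap, ?_, p.swap_swap⟩)
        by_contra h'
        exact h ((hUone p.1 p.2 hp).mpr h')
    · intro hp
      rcases mem_union.mp hp with h | h
      · exact hUsub h
      · obtain ⟨q, hq, rfl⟩ := mem_image.mp h
        exact hsym q.1 q.2 (hUsub hq)
  have hdisj : Disjoint U (U.image Prod.swap) := by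
    rw [disjoint_left]
    rintro _ hp hp'
    obtain ⟨q, hq, rfl⟩ := mem_image.mp hp'
    exact hswap q hq hp
  rw [hE, sum_union hdisj, sum_image (fun p _ q _ h => Prod.swap_injective h), sum_add_distrib]

/-- The gradient term is bounded by convexity of `‖·‖²`, the dual term by concavity of
`t ↦ t r - t² / 4`. -/
theorem edge_gap_le {E : Type*} [NormedAddCommGroup E] [InnerProductSpace ℝ E] {s : ℝ}
    (hs : 0 ≤ s) (c t : ℝ) (v w : E) :
    2 * s * ⟪v, w - v⟫ - ((‖v‖ ^ 2 - c) - s / 2) * (t - s)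
      ≤ (s * (‖w‖ ^ 2 - c) - s ^ 2 / 4) - (t * (‖v‖ ^ 2 - c) - t ^ 2 / 4) := by
  have hconvex : 2 * ⟪v, w - v⟫ ≤ ‖w‖ ^ 2 - ‖v‖ ^ 2 := by
    rw [inner_sub_right, real_inner_self_eq_norm_sq]
    nlinarith [norm_sub_sq_real w v, real_inner_comm v w, sq_nonneg ‖w - v‖]
  nlinarith [mul_le_mul_of_nonneg_left hconvex hs, sq_nonneg (t - s)]

theorem sum_inner_gradient_eq {V S A : Type*} [NormedAddCommGroup V] [InnerProductSpace ℝ V]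
    [Fintype S] [DecidableEq S] [Fintype A] [DecidableEq A] (a : A → V) {Ess U : Finset (S × S)}
    (hsym : ∀ i j : S, (i, j) ∈ Ess → (j, i) ∈ Ess) (hUsub : U ⊆ Ess)
    (hUone : ∀ i j : S, (i, j) ∈ Ess → ((i, j) ∈ U ↔ (j, i) ∉ U))
    (Eas : Finset (S × A)) (x xd : S → V)
    (σs : S × S → ℝ) (σa : S × A → ℝ) :
    (∑ i : S,
        ⟪(∑ j ∈ univ.filter (fun j => (i, j) ∈ Ess),
            (2 * (if (i, j) ∈ U then σs (i, j) else σs (j, i))) • (x i - x j))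
          + ∑ l ∈ univ.filter (fun l => (i, l) ∈ Eas), (2 * σa (i, l)) • (x i - a l),
          xd i - x i⟫)
      = ∑ p ∈ U, 2 * σs p * ⟪x p.1 - x p.2, (xd p.1 - xd p.2) - (x p.1 - x p.2)⟫
        + ∑ q ∈ Eas, 2 * σa q * ⟪x q.1 - a q.2, (xd q.1 - a q.2) - (x q.1 - a q.2)⟫ := by
  simp only [inner_add_left, sum_inner, real_inner_smul_left]
  rw [sum_add_distrib,
    sum_sum_filter_mem Ess (fun p => 2 * (if p ∈ U then σs p else σs (p.2, p.1)) *
      ⟪x p.1 - x p.2, xd p.1 - x p.1⟫),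
    sum_sum_filter_mem Eas (fun q => 2 * σa q * ⟪x q.1 - a q.2, xd q.1 - x q.1⟫),
    sum_eq_sum_add_swap_of_orientation hsym hUsub hUone]
  congr 1
  · refine sum_congr rfl fun p hp => ?_
    have hswap : p.swap ∉ U := (hUone p.1 p.2 (hUsub hp)).mp hp
    simp only [if_pos hp, if_neg hswap, Prod.fst_swap, Prod.snd_swap, Prod.mk.eta]
    rw [← neg_sub (x p.1) (x p.2), inner_neg_left,
      show xd p.1 - xd p.2 - (x p.1 - x p.2) = (xd p.1 - x p.1) - (xd p.2 - x p.2) by abel,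
      inner_sub_right (x p.1 - x p.2) (xd p.1 - x p.1)]
    ring
  · simp only [sub_sub_sub_cancel_right]

theorem stmt_11_general
    (n : ℕ)
    (S A : Type) [Fintype S] [DecidableEq S] [Fintype A] [DecidableEq A]
    (a : A → EuclideanSpace ℝ (Fin n))
    (Ess : Finset (S × S))
    (hsym : ∀ i j : S, (i, j) ∈ Ess → (j, i) ∈ Ess)
    (U : Finset (S × S)) (hUsub : U ⊆ Ess)
    (hUone : ∀ i j : S, (i, j) ∈ Ess → ((i, j) ∈ U ↔ (j, i) ∉ U))
    (Eas : Finset (S × A))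
    (d : S → S → ℝ)
    (e : S → A → ℝ)
    (Γ : (S → EuclideanSpace ℝ (Fin n)) → (S × S → ℝ) → (S × A → ℝ) → ℝ)
    (hΓ : ∀ x σs σa, Γ x σs σa =
      (∑ p ∈ U, (σs p * (‖x p.1 - x p.2‖ ^ 2 - d p.1 p.2 ^ 2) - σs p ^ 2 / 4))
        + ∑ q ∈ Eas,
            (σa q * (‖x q.1 - a q.2‖ ^ 2 - e q.1 q.2 ^ 2) - σa q ^ 2 / 4)) :
    ∀ (x : S → EuclideanSpace ℝ (Fin n)) (σs : S × S → ℝ) (σa : S × A → ℝ),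
      (∀ p ∈ U, 0 ≤ σs p) → (∀ q ∈ Eas, 0 ≤ σa q) →
      ∀ (xd : S → EuclideanSpace ℝ (Fin n)) (σsd : S × S → ℝ) (σad : S × A → ℝ),
      (∑ i : S,
        ⟪(∑ j ∈ Finset.univ.filter (fun j => (i, j) ∈ Ess),
            (2 * (if (i, j) ∈ U then σs (i, j) else σs (j, i))) • (x i - x j))
          + ∑ l ∈ Finset.univ.filter (fun l => (i, l) ∈ Eas),
              (2 * σa (i, l)) • (x i - a l),
          xd i - x i⟫)
        - ((∑ p ∈ U,
              ((‖x p.1 - x p.2‖ ^ 2 - d p.1 p.2 ^ 2) - σs p / 2) * (σsd p - σs p))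
            + ∑ q ∈ Eas,
                ((‖x q.1 - a q.2‖ ^ 2 - e q.1 q.2 ^ 2) - σa q / 2) * (σad q - σa q))
      ≤ Γ xd σs σa - Γ x σsd σad := by
  intro x σs σa hσs hσa xd σsd σad
  rw [hΓ, hΓ, sum_inner_gradient_eq a hsym hUsub hUone Eas x xd σs σa]
  have hU := sum_le_sum fun p hp =>
    edge_gap_le (hσs p hp) (d p.1 p.2 ^ 2) (σsd p) (x p.1 - x p.2) (xd p.1 - xd p.2)
  have hA := sum_le_sum fun q hq =>
    edge_gap_le (hσa q hq) (e q.1 q.2 ^ 2) (σad q) (x q.1 - a q.2) (xd q.1 - a q.2)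
  simp only [sum_sub_distrib] at hU hA ⊢
  linarith

/-- Duality-gap inequality for the pseudo-gradient of the
complementary function `Γ`. -/
theorem stmt_11
    (n : ℕ) (hn : 1 ≤ n)
    (S A : Type) [Fintype S] [DecidableEq S] [Fintype A] [DecidableEq A]
    (a : A → EuclideanSpace ℝ (Fin n))
    (Ess : Finset (S × S))
    (hsym : ∀ i j : S, (i, j) ∈ Ess → (j, i) ∈ Ess)
    (hirr : ∀ i : S, (i, i) ∉ Ess)
    (U : Finset (S × S)) (hUsub : U ⊆ Ess)
    (hUone : ∀ i j : S, (i, j) ∈ Ess → ((i, j) ∈ U ↔ (j, i) ∉ U))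
    (Eas : Finset (S × A))
    (d : S → S → ℝ) (hd : ∀ i j, d i j = d j i)
    (e : S → A → ℝ)
    (Γ : (S → EuclideanSpace ℝ (Fin n)) → (S × S → ℝ) → (S × A → ℝ) → ℝ)
    (hΓ : ∀ x σs σa, Γ x σs σa =
      (∑ p ∈ U, (σs p * (‖x p.1 - x p.2‖ ^ 2 - d p.1 p.2 ^ 2) - σs p ^ 2 / 4))
        + ∑ q ∈ Eas,
            (σa q * (‖x q.1 - a q.2‖ ^ 2 - e q.1 q.2 ^ 2) - σa q ^ 2 / 4)) :
    ∀ (x : S → EuclideanSpace ℝ (Fin n)) (σs : S × S → ℝ) (σa : S × A → ℝ),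
      (∀ p ∈ U, 0 ≤ σs p) → (∀ q ∈ Eas, 0 ≤ σa q) →
      ∀ (xd : S → EuclideanSpace ℝ (Fin n)) (σsd : S × S → ℝ) (σad : S × A → ℝ),
      (∑ i : S,
        ⟪(∑ j ∈ Finset.univ.filter (fun j => (i, j) ∈ Ess),
            (2 * (if (i, j) ∈ U then σs (i, j) else σs (j, i))) • (x i - x j))
          + ∑ l ∈ Finset.univ.filter (fun l => (i, l) ∈ Eas),
              (2 * σa (i, l)) • (x i - a l),
          xd i - x i⟫)
        - ((∑ p ∈ U,
              ((‖x p.1 - x p.2‖ ^ 2 - d p.1 p.2 ^ 2) - σs p / 2) * (σsd p - σs p))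
            + ∑ q ∈ Eas,
                ((‖x q.1 - a q.2‖ ^ 2 - e q.1 q.2 ^ 2) - σa q / 2) * (σad q - σa q))
      ≤ Γ xd σs σa - Γ x σsd σad :=
  stmt_11_general n S A a Ess hsym U hUsub hUone Eas d e Γ hΓ
end

section
/- Duality-gap bound for the projected gradient descent–ascent iterates (Theorem 2, general form): let Ω_i ⊆ ℝⁿ be nonempty compact convex sets, Ω = ∏_{i∈S} Ω_i, W > 0, and B = [0, W]^{U ⊔ E_as} the box of dual variables with all components in [0, W]. Let α_1, α_2, … > 0 be step sizes and generate (x[k], σ[k]) ∈ Ω × B by x_i[k+1] = Π_{Ω_i}(x_i[k] − α_k ∇_{x_i}Γ(x[k], σ[k])) for each i ∈ S and σ[k+1] = Π_B(σ[k] + α_k ∇_σΓ(x[k], σ[k])), starting from (x[1], σ[1]) ∈ Ω × B. Suppose M₂ > 0 bounds the pseudo-gradient: ‖(∇_x Γ(x,σ), −∇_σΓ(x,σ))‖ ≤ M₂ for all (x,σ) ∈ Ω × B. Then for every (x⋄, σ⋄) ∈ Ω × B and every k ≥ 1, the weighted averages x̂[k] = (Σ_{j=1}^k α_j x[j])/(Σ_{j=1}^k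 α_j) and σ̂[k] = (Σ_{j=1}^k α_j σ[j])/(Σ_{j=1}^k α_j) satisfy Γ(x̂[k], σ⋄) − Γ(x⋄, σ̂[k]) ≤ (‖(x[1], σ[1]) − (x⋄, σ⋄)‖² + M₂² Σ_{j=1}^k α_j²) / (2 Σ_{j=1}^k α_j). -/
open scoped BigOperators RealInnerProductSpace

/-!
For `σ ≥ 0` the complementary function `Γ(x, σ)` is convex in `x`, and it is concave in `σ`
(quadratic with leading term `-σ²/4`); both facts are first-order inequalities with the explicit
partial gradients. Projections onto convex sets do not increase the distance to points of the set,
so with `D m` the squared distance from `(x[m], σ[m])` to `(x⋄, σ⋄)` one step gives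
`D (m+1) ≤ D m - 2 α_m (Γ(x[m], σ⋄) - Γ(x⋄, σ[m])) + α_m² M₂²`. Telescoping bounds the weighted
sum of these gaps, and Jensen's inequality at the weighted averages, obtained from the supporting
affine functions there, moves the weights inside `Γ`.
-/

open Finset

section

variable {F : Type*} [NormedAddCommGroup F] [InnerProductSpace ℝ F]

theorem norm_sub_sq_le_of_forall_norm_sub_le {K : Set F} (hK : Convex ℝ K) {u v : F}
    (hv : v ∈ K) (hmin : ∀ w ∈ K, ‖u - v‖ ≤ ‖u - w‖) {w : F} (hw : w ∈ K) :
    ‖v - w‖ ^ 2 ≤ ‖u - w‖ ^ 2 := by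
  have hobtuse : ⟪u - v, w - v⟫ ≤ 0 := by
    have : Nonempty K := ⟨⟨v, hv⟩⟩
    refine (norm_eq_iInf_iff_real_inner_le_zero hK hv).1 (le_antisymm ?_ ?_) w hw
    · exact le_ciInf fun w => hmin w w.2
    · exact ciInf_le ⟨0, by rintro _ ⟨w, rfl⟩; positivity⟩ (⟨v, hv⟩ : K)
  rw [← norm_neg (v - w), neg_sub, show u - w = (u - v) - (w - v) by abel,
    norm_sub_sq_real (u - v)]
  nlinarith [sq_nonneg ‖u - v‖]

theorem sq_max_min_sub_le {a b s : ℝ} (hs : s ∈ Set.Icc a b) (t : ℝ) :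
    (max a (min b t) - s) ^ 2 ≤ (t - s) ^ 2 := by
  have h := Set.abs_projIcc_sub_projIcc (h := hs.1.trans hs.2) (c := t) (d := s)
  rw [Set.projIcc_of_mem _ hs] at h
  exact sq_le_sq.2 h

theorem sum_norm_sub_sq_le_of_proj_step {ι : Type*} [Fintype ι] {K : ι → Set F}
    (hK : ∀ i, Convex ℝ (K i)) {P : ι → F → F}
    (hP : ∀ i u, P i u ∈ K i ∧ ∀ w ∈ K i, ‖u - P i u‖ ≤ ‖u - w‖) {α : ℝ} {x x' g w : ι → F}
    (hx' : ∀ i, x' i = P i (x i - α • g i)) (hw : ∀ i, w i ∈ K i) :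
    ∑ i, ‖x' i - w i‖ ^ 2
      ≤ ∑ i, ‖x i - w i‖ ^ 2 + 2 * α * ∑ i, ⟪g i, w i - x i⟫ + α ^ 2 * ∑ i, ‖g i‖ ^ 2 := by
  rw [mul_sum, mul_sum, ← sum_add_distrib, ← sum_add_distrib]
  refine sum_le_sum fun i _ => ?_
  calc ‖x' i - w i‖ ^ 2 ≤ ‖(x i - α • g i) - w i‖ ^ 2 :=
        hx' i ▸ norm_sub_sq_le_of_forall_norm_sub_le (hK i) (hP i _).1 (hP i _).2 (hw i)
    _ = ‖x i - w i‖ ^ 2 + 2 * α * ⟪g i, w i - x i⟫ + α ^ 2 * ‖g i‖ ^ 2 := by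
      rw [show (x i - α • g i) - w i = (x i - w i) - α • g i by abel, norm_sub_sq_real,
        real_inner_smul_right, norm_smul, mul_pow, Real.norm_eq_abs, sq_abs,
        ← neg_sub (w i) (x i), inner_neg_left, real_inner_comm]
      ring

theorem sum_sq_sub_le_of_clamp_step {κ : Type*} {s : Finset κ} {a b α : ℝ} {σ σ' g w : κ → ℝ}
    (hσ' : ∀ p ∈ s, σ' p = max a (min b (σ p + α * g p))) (hw : ∀ p ∈ s, w p ∈ Set.Icc a b) :
    ∑ p ∈ s, (σ' p - w p) ^ 2
      ≤ ∑ p ∈ s, (σ p - w p) ^ 2 - 2 * α * ∑ p ∈ s, g p * (w p - σ p)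
        + α ^ 2 * ∑ p ∈ s, g p ^ 2 := by
  rw [mul_sum, mul_sum, ← sum_sub_distrib, ← sum_add_distrib]
  refine sum_le_sum fun p hp => ?_
  calc (σ' p - w p) ^ 2 ≤ (σ p + α * g p - w p) ^ 2 := hσ' p hp ▸ sq_max_min_sub_le (hw p hp) _
    _ = _ := by ring

theorem two_mul_sum_le_of_le_sub_add {D g α : ℕ → ℝ} {C : ℝ} (hD : ∀ m, 0 ≤ D m)
    (hstep : ∀ m, 1 ≤ m → D (m + 1) ≤ D m - 2 * α m * g m + C * α m ^ 2) (k : ℕ) :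
    2 * ∑ j ∈ Icc 1 k, α j * g j ≤ D 1 + C * ∑ j ∈ Icc 1 k, α j ^ 2 := by
  suffices h : ∀ k, D (k + 1) + 2 * ∑ j ∈ Icc 1 k, α j * g j
      ≤ D 1 + C * ∑ j ∈ Icc 1 k, α j ^ 2 by
    linarith [h k, hD (k + 1)]
  intro k
  induction k with
  | zero => simp
  | succ k ih =>
    rw [sum_Icc_succ_top (by omega), sum_Icc_succ_top (by omega)]
    linarith [hstep (k + 1) (by omega)]

theorem mul_le_sum_mul_of_le_add_dual {ι E : Type*} [AddCommGroup E] [Module ℝ E] {f : E → ℝ}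
    {x₀ : E} (ℓ : Module.Dual ℝ E) (hf : ∀ y, f x₀ + ℓ (y - x₀) ≤ f y) {s : Finset ι}
    {w : ι → ℝ} (hw : ∀ i ∈ s, 0 ≤ w i) {y : ι → E}
    (hx₀ : (∑ i ∈ s, w i) • x₀ = ∑ i ∈ s, w i • y i) :
    (∑ i ∈ s, w i) * f x₀ ≤ ∑ i ∈ s, w i * f (y i) := by
  have hℓ : ∑ i ∈ s, w i * ℓ (y i - x₀) = 0 := by
    simp_rw [← smul_eq_mul, ← map_smul, ← map_sum, smul_sub, sum_sub_distrib, ← sum_smul, hx₀,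
      sub_self, map_zero]
  calc (∑ i ∈ s, w i) * f x₀ = ∑ i ∈ s, w i * (f x₀ + ℓ (y i - x₀)) := by
        simp_rw [mul_add, sum_add_distrib, hℓ, sum_mul, add_zero]
    _ ≤ ∑ i ∈ s, w i * f (y i) := sum_le_sum fun i hi => mul_le_mul_of_nonneg_left (hf _) (hw i hi)

theorem sum_mul_le_mul_of_add_dual_le {ι E : Type*} [AddCommGroup E] [Module ℝ E] {f : E → ℝ}
    {x₀ : E} (ℓ : Module.Dual ℝ E) (hf : ∀ y, f y ≤ f x₀ + ℓ (y - x₀)) {s : Finset ι}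
    {w : ι → ℝ} (hw : ∀ i ∈ s, 0 ≤ w i) {y : ι → E}
    (hx₀ : (∑ i ∈ s, w i) • x₀ = ∑ i ∈ s, w i • y i) :
    ∑ i ∈ s, w i * f (y i) ≤ (∑ i ∈ s, w i) * f x₀ := by
  have h := mul_le_sum_mul_of_le_add_dual (f := fun y => -f y) (-ℓ)
    (fun y => by linarith [hf y, LinearMap.neg_apply ℓ (y - x₀)]) hw hx₀
  simpa only [mul_neg, sum_neg_distrib, neg_le_neg_iff] using h

theorem Finset.sum_eq_sum_add_swap {α M : Type*} [AddCommMonoid M] [DecidableEq α]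
    {E U : Finset (α × α)} (hsym : ∀ i j, (i, j) ∈ E → (j, i) ∈ E) (hU : U ⊆ E)
    (hUone : ∀ i j, (i, j) ∈ E → ((i, j) ∈ U ↔ (j, i) ∉ U)) (f : α × α → M) :
    ∑ p ∈ E, f p = ∑ p ∈ U, (f p + f p.swap) := by
  have hcompl : E \ U = U.image Prod.swap := by
    ext ⟨i, j⟩
    simp only [mem_sdiff, mem_image, Prod.exists, Prod.swap_prod_mk, Prod.mk.injEq]
    constructor
    · rintro ⟨hE, hnot⟩
      exact ⟨j, i, (hUone j i (hsym i j hE)).2 hnot, rfl, rfl⟩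
    · rintro ⟨j, i, hji, rfl, rfl⟩
      exact ⟨hsym j i (hU hji), (hUone j i (hU hji)).1 hji⟩
  rw [← union_sdiff_of_subset hU, sum_union disjoint_sdiff, hcompl,
    sum_image fun p _ q _ h => Prod.swap_injective h, sum_add_distrib]

theorem mul_norm_sq_sub_add_two_mul_inner_le {σ : ℝ} (hσ : 0 ≤ σ) (u h v : F) (huv : u + h = v)
    (c : ℝ) : σ * (‖u‖ ^ 2 - c) + 2 * σ * ⟪u, h⟫ ≤ σ * (‖v‖ ^ 2 - c) := by
  rw [← huv, norm_add_sq_real]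
  nlinarith [mul_nonneg hσ (sq_nonneg ‖h‖)]

end

namespace SNL

variable {S A F : Type*}

section Dual

variable [NormedAddCommGroup F]

noncomputable def complementaryFn (a : A → F) (U : Finset (S × S)) (Eas : Finset (S × A))
    (d : S → S → ℝ) (e : S → A → ℝ) (x : S → F) (σs : S × S → ℝ) (σa : S × A → ℝ) : ℝ :=
  (∑ p ∈ U, (σs p * (‖x p.1 - x p.2‖ ^ 2 - d p.1 p.2 ^ 2) - σs p ^ 2 / 4))
    + ∑ q ∈ Eas, (σa q * (‖x q.1 - a q.2‖ ^ 2 - e q.1 q.2 ^ 2) - σa q ^ 2 / 4)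

noncomputable def gradSigmaS (d : S → S → ℝ) (x : S → F) (σs : S × S → ℝ) (p : S × S) : ℝ :=
  (‖x p.1 - x p.2‖ ^ 2 - d p.1 p.2 ^ 2) - σs p / 2

noncomputable def gradSigmaA (a : A → F) (e : S → A → ℝ) (x : S → F) (σa : S × A → ℝ)
    (q : S × A) : ℝ :=
  (‖x q.1 - a q.2‖ ^ 2 - e q.1 q.2 ^ 2) - σa q / 2

variable (a : A → F) (U : Finset (S × S)) (Eas : Finset (S × A)) (d : S → S → ℝ)
  (e : S → A → ℝ)

theorem complementaryFn_le_add_sum_grad (x : S → F) (σs τs : S × S → ℝ) (σa τa : S × A → ℝ) :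
    complementaryFn a U Eas d e x τs τa
      ≤ complementaryFn a U Eas d e x σs σa + ∑ p ∈ U, gradSigmaS d x σs p * (τs p - σs p)
        + ∑ q ∈ Eas, gradSigmaA a e x σa q * (τa q - σa q) := by
  have hquad (c σ τ : ℝ) : τ * c - τ ^ 2 / 4 ≤ σ * c - σ ^ 2 / 4 + (c - σ / 2) * (τ - σ) := by
    nlinarith [sq_nonneg (τ - σ)]
  have hU := sum_le_sum fun p (_ : p ∈ U) =>
    hquad (‖x p.1 - x p.2‖ ^ 2 - d p.1 p.2 ^ 2) (σs p) (τs p)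
  have hA := sum_le_sum fun q (_ : q ∈ Eas) =>
    hquad (‖x q.1 - a q.2‖ ^ 2 - e q.1 q.2 ^ 2) (σa q) (τa q)
  simp only [sum_add_distrib] at hU hA
  simp only [complementaryFn, gradSigmaS, gradSigmaA]
  linarith

theorem sum_mul_complementaryFn_le_weightedAvg {ι : Type*} {s : Finset ι} {w : ι → ℝ}
    (hw : ∀ j ∈ s, 0 ≤ w j) (hs : ∑ j ∈ s, w j ≠ 0) (x : S → F) (σs : ι → S × S → ℝ)
    (σa : ι → S × A → ℝ) :
    ∑ j ∈ s, w j * complementaryFn a U Eas d e x (σs j) (σa j)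
      ≤ (∑ j ∈ s, w j) * complementaryFn a U Eas d e x
          (fun p => (∑ j ∈ s, w j * σs j p) / ∑ j ∈ s, w j)
          (fun q => (∑ j ∈ s, w j * σa j q) / ∑ j ∈ s, w j) := by
  set τ₀ : (S × S → ℝ) × (S × A → ℝ) :=
    (fun p => (∑ j ∈ s, w j * σs j p) / ∑ j ∈ s, w j,
      fun q => (∑ j ∈ s, w j * σa j q) / ∑ j ∈ s, w j)
  refine sum_mul_le_mul_of_add_dual_le (f := fun τ => complementaryFn a U Eas d e x τ.1 τ.2)
    (x₀ := τ₀) (y := fun j => (σs j, σa j))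
    ((∑ p ∈ U, gradSigmaS d x τ₀.1 p • LinearMap.proj p) ∘ₗ LinearMap.fst ℝ _ _
      + (∑ q ∈ Eas, gradSigmaA a e x τ₀.2 q • LinearMap.proj q) ∘ₗ LinearMap.snd ℝ _ _)
    (fun τ => ?_) hw ?_
  · simpa [add_assoc] using complementaryFn_le_add_sum_grad a U Eas d e x τ₀.1 τ.1 τ₀.2 τ.2
  · ext p <;> simp [τ₀, Prod.fst_sum, Prod.snd_sum, Finset.sum_apply, mul_div_cancel₀ _ hs]

end Dual

section Primal

variable [NormedAddCommGroup F] [InnerProductSpace ℝ F] [Fintype S] [DecidableEq S] [Fintype A]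
  [DecidableEq A]

noncomputable def gradX (a : A → F) (Ess U : Finset (S × S)) (Eas : Finset (S × A)) (x : S → F)
    (σs : S × S → ℝ) (σa : S × A → ℝ) (i : S) : F :=
  (∑ j ∈ univ.filter (fun j => (i, j) ∈ Ess),
      (2 * (if (i, j) ∈ U then σs (i, j) else σs (j, i))) • (x i - x j))
    + ∑ l ∈ univ.filter (fun l => (i, l) ∈ Eas), (2 * σa (i, l)) • (x i - a l)

variable (a : A → F) {Ess : Finset (S × S)} (U : Finset (S × S)) (Eas : Finset (S × A))
  (d : S → S → ℝ) (e : S → A → ℝ)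

theorem sum_inner_gradX (hsym : ∀ i j, (i, j) ∈ Ess → (j, i) ∈ Ess) (hUsub : U ⊆ Ess)
    (hUone : ∀ i j, (i, j) ∈ Ess → ((i, j) ∈ U ↔ (j, i) ∉ U)) (x z : S → F) (σs : S × S → ℝ)
    (σa : S × A → ℝ) :
    ∑ i, ⟪gradX a Ess U Eas x σs σa i, z i⟫
      = ∑ p ∈ U, 2 * σs p * ⟪x p.1 - x p.2, z p.1 - z p.2⟫
        + ∑ q ∈ Eas, 2 * σa q * ⟪x q.1 - a q.2, z q.1⟫ := by
  simp only [gradX, inner_add_left, sum_inner, real_inner_smul_left, sum_add_distrib]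
  rw [← sum_finset_product' Ess univ (fun i => univ.filter fun j => (i, j) ∈ Ess) (by simp),
    ← sum_finset_product' Eas univ (fun i => univ.filter fun l => (i, l) ∈ Eas) (by simp),
    Finset.sum_eq_sum_add_swap hsym hUsub hUone]
  congr 1
  refine sum_congr rfl fun ⟨i, j⟩ hij => ?_
  rw [Prod.fst_swap, Prod.snd_swap, if_pos hij, if_neg ((hUone i j (hUsub hij)).1 hij),
    ← neg_sub (x i) (x j), inner_neg_left, inner_sub_right]
  ring

theorem complementaryFn_add_sum_inner_gradX_le (hsym : ∀ i j, (i, j) ∈ Ess → (j, i) ∈ Ess)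
    (hUsub : U ⊆ Ess) (hUone : ∀ i j, (i, j) ∈ Ess → ((i, j) ∈ U ↔ (j, i) ∉ U))
    {σs : S × S → ℝ} {σa : S × A → ℝ} (hσs : ∀ p ∈ U, 0 ≤ σs p) (hσa : ∀ q ∈ Eas, 0 ≤ σa q)
    (x y : S → F) :
    complementaryFn a U Eas d e x σs σa + ∑ i, ⟪gradX a Ess U Eas x σs σa i, y i - x i⟫
      ≤ complementaryFn a U Eas d e y σs σa := by
  have hU := sum_le_sum fun p hp => mul_norm_sq_sub_add_two_mul_inner_le (hσs p hp)
    (x p.1 - x p.2) ((y p.1 - x p.1) - (y p.2 - x p.2)) (y p.1 - y p.2) (by abel) (d p.1 p.2 ^ 2)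
  have hA := sum_le_sum fun q hq => mul_norm_sq_sub_add_two_mul_inner_le (hσa q hq)
    (x q.1 - a q.2) (y q.1 - x q.1) (y q.1 - a q.2) (by abel) (e q.1 q.2 ^ 2)
  rw [sum_add_distrib] at hU hA
  rw [sum_inner_gradX a U Eas hsym hUsub hUone]
  simp only [complementaryFn, sum_sub_distrib]
  linarith

theorem mul_complementaryFn_weightedAvg_le (hsym : ∀ i j, (i, j) ∈ Ess → (j, i) ∈ Ess)
    (hUsub : U ⊆ Ess) (hUone : ∀ i j, (i, j) ∈ Ess → ((i, j) ∈ U ↔ (j, i) ∉ U))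
    {σs : S × S → ℝ} {σa : S × A → ℝ} (hσs : ∀ p ∈ U, 0 ≤ σs p) (hσa : ∀ q ∈ Eas, 0 ≤ σa q)
    {ι : Type*} {s : Finset ι} {w : ι → ℝ} (hw : ∀ j ∈ s, 0 ≤ w j) (hs : ∑ j ∈ s, w j ≠ 0)
    (y : ι → S → F) :
    (∑ j ∈ s, w j)
        * complementaryFn a U Eas d e (fun i => (∑ j ∈ s, w j)⁻¹ • ∑ j ∈ s, w j • y j i) σs σa
      ≤ ∑ j ∈ s, w j * complementaryFn a U Eas d e (y j) σs σa := by
  set x₀ : S → F := fun i => (∑ j ∈ s, w j)⁻¹ • ∑ j ∈ s, w j • y j i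
  refine mul_le_sum_mul_of_le_add_dual (f := fun x => complementaryFn a U Eas d e x σs σa)
    (∑ i, (innerₛₗ ℝ (gradX a Ess U Eas x₀ σs σa i)).comp (LinearMap.proj i)) (fun y => ?_) hw ?_
  · simpa using complementaryFn_add_sum_inner_gradX_le a U Eas d e hsym hUsub hUone hσs hσa x₀ y
  · ext1 i
    simp [x₀, smul_inv_smul₀ hs, Finset.sum_apply]

theorem descentAscent_step_sq_dist_le (hsym : ∀ i j, (i, j) ∈ Ess → (j, i) ∈ Ess)
    (hUsub : U ⊆ Ess) (hUone : ∀ i j, (i, j) ∈ Ess → ((i, j) ∈ U ↔ (j, i) ∉ U))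
    {Ω : S → Set F} (hΩ : ∀ i, Convex ℝ (Ω i)) {P : S → F → F}
    (hP : ∀ i u, P i u ∈ Ω i ∧ ∀ w ∈ Ω i, ‖u - P i u‖ ≤ ‖u - w‖) {W α M : ℝ} (hα : 0 ≤ α)
    {x x' xd : S → F} {σs σs' σsd : S × S → ℝ} {σa σa' σad : S × A → ℝ}
    (hσs : ∀ p ∈ U, 0 ≤ σs p) (hσa : ∀ q ∈ Eas, 0 ≤ σa q)
    (hM : (∑ i, ‖gradX a Ess U Eas x σs σa i‖ ^ 2) + (∑ p ∈ U, gradSigmaS d x σs p ^ 2)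
      + (∑ q ∈ Eas, gradSigmaA a e x σa q ^ 2) ≤ M ^ 2)
    (hx' : ∀ i, x' i = P i (x i - α • gradX a Ess U Eas x σs σa i))
    (hσs' : ∀ p ∈ U, σs' p = max 0 (min W (σs p + α * gradSigmaS d x σs p)))
    (hσa' : ∀ q ∈ Eas, σa' q = max 0 (min W (σa q + α * gradSigmaA a e x σa q)))
    (hxd : ∀ i, xd i ∈ Ω i) (hσsd : ∀ p ∈ U, σsd p ∈ Set.Icc 0 W)
    (hσad : ∀ q ∈ Eas, σad q ∈ Set.Icc 0 W) :
    (∑ i, ‖x' i - xd i‖ ^ 2) + (∑ p ∈ U, (σs' p - σsd p) ^ 2) + ∑ q ∈ Eas, (σa' q - σad q) ^ 2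
      ≤ (∑ i, ‖x i - xd i‖ ^ 2) + (∑ p ∈ U, (σs p - σsd p) ^ 2)
          + (∑ q ∈ Eas, (σa q - σad q) ^ 2)
        - 2 * α * (complementaryFn a U Eas d e x σsd σad - complementaryFn a U Eas d e xd σs σa)
        + M ^ 2 * α ^ 2 := by
  have hprimal := sum_norm_sub_sq_le_of_proj_step hΩ hP hx' hxd
  have hdualS := sum_sq_sub_le_of_clamp_step hσs' hσsd
  have hdualA := sum_sq_sub_le_of_clamp_step hσa' hσad
  have hconvex := complementaryFn_add_sum_inner_gradX_le a U Eas d e hsym hUsub hUone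
    hσs hσa x xd
  have hconcave := complementaryFn_le_add_sum_grad a U Eas d e x σs σsd σa σad
  have hgap : complementaryFn a U Eas d e x σsd σad - complementaryFn a U Eas d e xd σs σa
      ≤ -∑ i, ⟪gradX a Ess U Eas x σs σa i, xd i - x i⟫
        + ∑ p ∈ U, gradSigmaS d x σs p * (σsd p - σs p)
        + ∑ q ∈ Eas, gradSigmaA a e x σa q * (σad q - σa q) := by
    linarith
  linarith [mul_le_mul_of_nonneg_left hgap hα, mul_le_mul_of_nonneg_left hM (sq_nonneg α)]

end Primal

end SNL

theorem stmt_12_general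
    (n : ℕ)
    (S A : Type) [Fintype S] [DecidableEq S] [Fintype A] [DecidableEq A]
    (a : A → EuclideanSpace ℝ (Fin n))
    (Ess : Finset (S × S))
    (hsym : ∀ i j : S, (i, j) ∈ Ess → (j, i) ∈ Ess)
    (U : Finset (S × S)) (hUsub : U ⊆ Ess)
    (hUone : ∀ i j : S, (i, j) ∈ Ess → ((i, j) ∈ U ↔ (j, i) ∉ U))
    (Eas : Finset (S × A))
    (d : S → S → ℝ)
    (e : S → A → ℝ)
    -- the complementary function
    (Γ : (S → EuclideanSpace ℝ (Fin n)) → (S × S → ℝ) → (S × A → ℝ) → ℝ)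
    (hΓ : ∀ x σs σa, Γ x σs σa =
      (∑ p ∈ U, (σs p * (‖x p.1 - x p.2‖ ^ 2 - d p.1 p.2 ^ 2) - σs p ^ 2 / 4))
        + ∑ q ∈ Eas,
            (σa q * (‖x q.1 - a q.2‖ ^ 2 - e q.1 q.2 ^ 2) - σa q ^ 2 / 4))
    -- the partial gradients of Γ
    (Gx : (S → EuclideanSpace ℝ (Fin n)) → (S × S → ℝ) → (S × A → ℝ) →
      S → EuclideanSpace ℝ (Fin n))
    (hGx : ∀ x σs σa i, Gx x σs σa i =
      (∑ j ∈ Finset.univ.filter (fun j => (i, j) ∈ Ess),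
        (2 * (if (i, j) ∈ U then σs (i, j) else σs (j, i))) • (x i - x j))
        + ∑ l ∈ Finset.univ.filter (fun l => (i, l) ∈ Eas),
            (2 * σa (i, l)) • (x i - a l))
    (Gs : (S → EuclideanSpace ℝ (Fin n)) → (S × S → ℝ) → S × S → ℝ)
    (hGs : ∀ x σs p, Gs x σs p = (‖x p.1 - x p.2‖ ^ 2 - d p.1 p.2 ^ 2) - σs p / 2)
    (Ga : (S → EuclideanSpace ℝ (Fin n)) → (S × A → ℝ) → S × A → ℝ)
    (hGa : ∀ x σa q, Ga x σa q = (‖x q.1 - a q.2‖ ^ 2 - e q.1 q.2 ^ 2) - σa q / 2)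
    -- strategy sets and the dual box
    (Ω : S → Set (EuclideanSpace ℝ (Fin n)))
    (hΩcv : ∀ i, Convex ℝ (Ω i))
    (W : ℝ) (hW : 0 < W)
    -- metric projections onto the strategy sets
    (projΩ : S → EuclideanSpace ℝ (Fin n) → EuclideanSpace ℝ (Fin n))
    (hproj : ∀ i u, projΩ i u ∈ Ω i ∧ ∀ w ∈ Ω i, ‖u - projΩ i u‖ ≤ ‖u - w‖)
    -- step sizes and gradient bound
    (α : ℕ → ℝ) (hα : ∀ j, 0 < α j)
    (M₂ : ℝ)
    (hM₂ : ∀ (x : S → EuclideanSpace ℝ (Fin n)) (σs : S × S → ℝ) (σa : S × A → ℝ),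
      (∀ i, x i ∈ Ω i) → (∀ p ∈ U, σs p ∈ Set.Icc (0 : ℝ) W) →
      (∀ q ∈ Eas, σa q ∈ Set.Icc (0 : ℝ) W) →
      (∑ i : S, ‖Gx x σs σa i‖ ^ 2) + (∑ p ∈ U, Gs x σs p ^ 2)
        + (∑ q ∈ Eas, Ga x σa q ^ 2) ≤ M₂ ^ 2)
    -- the iterates
    (x : ℕ → S → EuclideanSpace ℝ (Fin n))
    (σs : ℕ → S × S → ℝ) (σa : ℕ → S × A → ℝ)
    (hx1 : ∀ i, x 1 i ∈ Ω i)
    (hσs1 : ∀ p ∈ U, σs 1 p ∈ Set.Icc (0 : ℝ) W)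
    (hσa1 : ∀ q ∈ Eas, σa 1 q ∈ Set.Icc (0 : ℝ) W)
    (hxup : ∀ k, 1 ≤ k → ∀ i,
      x (k + 1) i = projΩ i (x k i - α k • Gx (x k) (σs k) (σa k) i))
    (hσsup : ∀ k, 1 ≤ k → ∀ p ∈ U,
      σs (k + 1) p = max 0 (min W (σs k p + α k * Gs (x k) (σs k) p)))
    (hσaup : ∀ k, 1 ≤ k → ∀ q ∈ Eas,
      σa (k + 1) q = max 0 (min W (σa k q + α k * Ga (x k) (σa k) q))) :
    -- conclusion: duality-gap bound at the weighted averages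
    ∀ (xd : S → EuclideanSpace ℝ (Fin n)) (σsd : S × S → ℝ) (σad : S × A → ℝ),
      (∀ i, xd i ∈ Ω i) → (∀ p ∈ U, σsd p ∈ Set.Icc (0 : ℝ) W) →
      (∀ q ∈ Eas, σad q ∈ Set.Icc (0 : ℝ) W) →
      ∀ k, 1 ≤ k →
      Γ (fun i => (∑ j ∈ Finset.Icc 1 k, α j)⁻¹ • ∑ j ∈ Finset.Icc 1 k, α j • x j i)
          σsd σad
        - Γ xd
            (fun p => (∑ j ∈ Finset.Icc 1 k, α j * σs j p) / ∑ j ∈ Finset.Icc 1 k, α j)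
            (fun q => (∑ j ∈ Finset.Icc 1 k, α j * σa j q) / ∑ j ∈ Finset.Icc 1 k, α j)
      ≤ ((∑ i : S, ‖x 1 i - xd i‖ ^ 2) + (∑ p ∈ U, (σs 1 p - σsd p) ^ 2)
          + (∑ q ∈ Eas, (σa 1 q - σad q) ^ 2)
          + M₂ ^ 2 * ∑ j ∈ Finset.Icc 1 k, α j ^ 2)
        / (2 * ∑ j ∈ Finset.Icc 1 k, α j) := by
  intro xd σsd σad hxd hσsd hσad k hk
  obtain rfl : Γ = SNL.complementaryFn a U Eas d e := funext₃ hΓ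
  obtain rfl : Gx = SNL.gradX a Ess U Eas := funext₃ fun x σs σa => funext (hGx x σs σa)
  obtain rfl : Gs = SNL.gradSigmaS d := funext₃ hGs
  obtain rfl : Ga = SNL.gradSigmaA a e := funext₃ hGa
  have hfeas : ∀ m, 1 ≤ m → (∀ i, x m i ∈ Ω i) ∧ (∀ p ∈ U, σs m p ∈ Set.Icc 0 W)
      ∧ ∀ q ∈ Eas, σa m q ∈ Set.Icc 0 W := by
    intro m hm
    induction m, hm using Nat.le_induction with
    | base => exact ⟨hx1, hσs1, hσa1⟩
    | succ m hm _ =>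
      exact ⟨fun i => hxup m hm i ▸ (hproj i _).1,
        fun p hp => hσsup m hm p hp ▸ (Set.projIcc 0 W hW.le _).2,
        fun q hq => hσaup m hm q hq ▸ (Set.projIcc 0 W hW.le _).2⟩
  have hsum := two_mul_sum_le_of_le_sub_add
    (D := fun m => (∑ i, ‖x m i - xd i‖ ^ 2) + (∑ p ∈ U, (σs m p - σsd p) ^ 2)
      + ∑ q ∈ Eas, (σa m q - σad q) ^ 2) (fun m => by positivity)
    (fun m hm => SNL.descentAscent_step_sq_dist_le a U Eas d e hsym hUsub hUone hΩcv hproj (hα m).le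
      (fun p hp => ((hfeas m hm).2.1 p hp).1) (fun q hq => ((hfeas m hm).2.2 q hq).1)
      (hM₂ _ _ _ (hfeas m hm).1 (hfeas m hm).2.1 (hfeas m hm).2.2)
      (hxup m hm) (hσsup m hm) (hσaup m hm) hxd hσsd hσad) k
  have hT : 0 < ∑ j ∈ Finset.Icc 1 k, α j :=
    Finset.sum_pos (fun j _ => hα j) (Finset.nonempty_Icc.2 hk)
  have hprimal := SNL.mul_complementaryFn_weightedAvg_le a U Eas d e hsym hUsub hUone
    (fun p hp => (hσsd p hp).1) (fun q hq => (hσad q hq).1) (fun j _ => (hα j).le) hT.ne' x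
  have hdual := SNL.sum_mul_complementaryFn_le_weightedAvg a U Eas d e (fun j _ => (hα j).le)
    hT.ne' xd σs σa
  simp only [mul_sub, sum_sub_distrib] at hsum
  rw [le_div_iff₀ (by positivity)]
  linarith

/-- Duality-gap bound for the projected gradient descent–ascent
iterates of the conjugate-based SNL algorithm (Theorem 2, general form). -/
theorem stmt_12
    (n : ℕ) (hn : 1 ≤ n)
    (S A : Type) [Fintype S] [DecidableEq S] [Fintype A] [DecidableEq A]
    (a : A → EuclideanSpace ℝ (Fin n))
    (Ess : Finset (S × S))
    (hsym : ∀ i j : S, (i, j) ∈ Ess → (j, i) ∈ Ess)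
    (hirr : ∀ i : S, (i, i) ∉ Ess)
    (U : Finset (S × S)) (hUsub : U ⊆ Ess)
    (hUone : ∀ i j : S, (i, j) ∈ Ess → ((i, j) ∈ U ↔ (j, i) ∉ U))
    (Eas : Finset (S × A))
    (d : S → S → ℝ) (hd : ∀ i j, d i j = d j i)
    (e : S → A → ℝ)
    -- the complementary function
    (Γ : (S → EuclideanSpace ℝ (Fin n)) → (S × S → ℝ) → (S × A → ℝ) → ℝ)
    (hΓ : ∀ x σs σa, Γ x σs σa =
      (∑ p ∈ U, (σs p * (‖x p.1 - x p.2‖ ^ 2 - d p.1 p.2 ^ 2) - σs p ^ 2 / 4))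
        + ∑ q ∈ Eas,
            (σa q * (‖x q.1 - a q.2‖ ^ 2 - e q.1 q.2 ^ 2) - σa q ^ 2 / 4))
    -- the partial gradients of Γ
    (Gx : (S → EuclideanSpace ℝ (Fin n)) → (S × S → ℝ) → (S × A → ℝ) →
      S → EuclideanSpace ℝ (Fin n))
    (hGx : ∀ x σs σa i, Gx x σs σa i =
      (∑ j ∈ Finset.univ.filter (fun j => (i, j) ∈ Ess),
        (2 * (if (i, j) ∈ U then σs (i, j) else σs (j, i))) • (x i - x j))
        + ∑ l ∈ Finset.univ.filter (fun l => (i, l) ∈ Eas),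
            (2 * σa (i, l)) • (x i - a l))
    (Gs : (S → EuclideanSpace ℝ (Fin n)) → (S × S → ℝ) → S × S → ℝ)
    (hGs : ∀ x σs p, Gs x σs p = (‖x p.1 - x p.2‖ ^ 2 - d p.1 p.2 ^ 2) - σs p / 2)
    (Ga : (S → EuclideanSpace ℝ (Fin n)) → (S × A → ℝ) → S × A → ℝ)
    (hGa : ∀ x σa q, Ga x σa q = (‖x q.1 - a q.2‖ ^ 2 - e q.1 q.2 ^ 2) - σa q / 2)
    -- strategy sets and the dual box
    (Ω : S → Set (EuclideanSpace ℝ (Fin n)))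
    (hΩne : ∀ i, (Ω i).Nonempty) (hΩcv : ∀ i, Convex ℝ (Ω i))
    (hΩcp : ∀ i, IsCompact (Ω i))
    (W : ℝ) (hW : 0 < W)
    -- metric projections onto the strategy sets
    (projΩ : S → EuclideanSpace ℝ (Fin n) → EuclideanSpace ℝ (Fin n))
    (hproj : ∀ i u, projΩ i u ∈ Ω i ∧ ∀ w ∈ Ω i, ‖u - projΩ i u‖ ≤ ‖u - w‖)
    -- step sizes and gradient bound
    (α : ℕ → ℝ) (hα : ∀ j, 0 < α j)
    (M₂ : ℝ) (hM₂pos : 0 < M₂)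
    (hM₂ : ∀ (x : S → EuclideanSpace ℝ (Fin n)) (σs : S × S → ℝ) (σa : S × A → ℝ),
      (∀ i, x i ∈ Ω i) → (∀ p ∈ U, σs p ∈ Set.Icc (0 : ℝ) W) →
      (∀ q ∈ Eas, σa q ∈ Set.Icc (0 : ℝ) W) →
      (∑ i : S, ‖Gx x σs σa i‖ ^ 2) + (∑ p ∈ U, Gs x σs p ^ 2)
        + (∑ q ∈ Eas, Ga x σa q ^ 2) ≤ M₂ ^ 2)
    -- the iterates
    (x : ℕ → S → EuclideanSpace ℝ (Fin n))
    (σs : ℕ → S × S → ℝ) (σa : ℕ → S × A → ℝ)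
    (hx1 : ∀ i, x 1 i ∈ Ω i)
    (hσs1 : ∀ p ∈ U, σs 1 p ∈ Set.Icc (0 : ℝ) W)
    (hσa1 : ∀ q ∈ Eas, σa 1 q ∈ Set.Icc (0 : ℝ) W)
    (hxup : ∀ k, 1 ≤ k → ∀ i,
      x (k + 1) i = projΩ i (x k i - α k • Gx (x k) (σs k) (σa k) i))
    (hσsup : ∀ k, 1 ≤ k → ∀ p ∈ U,
      σs (k + 1) p = max 0 (min W (σs k p + α k * Gs (x k) (σs k) p)))
    (hσaup : ∀ k, 1 ≤ k → ∀ q ∈ Eas,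
      σa (k + 1) q = max 0 (min W (σa k q + α k * Ga (x k) (σa k) q))) :
    -- conclusion: duality-gap bound at the weighted averages
    ∀ (xd : S → EuclideanSpace ℝ (Fin n)) (σsd : S × S → ℝ) (σad : S × A → ℝ),
      (∀ i, xd i ∈ Ω i) → (∀ p ∈ U, σsd p ∈ Set.Icc (0 : ℝ) W) →
      (∀ q ∈ Eas, σad q ∈ Set.Icc (0 : ℝ) W) →
      ∀ k, 1 ≤ k →
      Γ (fun i => (∑ j ∈ Finset.Icc 1 k, α j)⁻¹ • ∑ j ∈ Finset.Icc 1 k, α j • x j i)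
          σsd σad
        - Γ xd
            (fun p => (∑ j ∈ Finset.Icc 1 k, α j * σs j p) / ∑ j ∈ Finset.Icc 1 k, α j)
            (fun q => (∑ j ∈ Finset.Icc 1 k, α j * σa j q) / ∑ j ∈ Finset.Icc 1 k, α j)
      ≤ ((∑ i : S, ‖x 1 i - xd i‖ ^ 2) + (∑ p ∈ U, (σs 1 p - σsd p) ^ 2)
          + (∑ q ∈ Eas, (σa 1 q - σad q) ^ 2)
          + M₂ ^ 2 * ∑ j ∈ Finset.Icc 1 k, α j ^ 2)
        / (2 * ∑ j ∈ Finset.Icc 1 k, α j) :=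
  stmt_12_general n S A a Ess hsym U hUsub hUone Eas d e Γ hΓ Gx hGx Gs hGs Ga hGa Ω hΩcv W hW projΩ
    hproj α hα M₂ hM₂ x σs σa hx1 hσs1 hσa1 hxup hσsup hσaup
end

section
/- Fixed points of the extra-gradient iteration collapse (key step of Theorem 3): let K be a nonempty closed convex subset of a finite-dimensional real inner product space, let F : K → E be L-Lipschitz on K (L ≥ 0), and let β > 0 satisfy βL < 1. If z, z̃ ∈ K satisfy z̃ = Π_K(z − β F(z)) and z = Π_K(z − β F(z̃)), then z̃ = z, and consequently z = Π_K(z − β F(z)). -/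
open scoped RealInnerProductSpace

/-- Fixed points of the extra-gradient iteration collapse: if
`z̃ = Π_K(z − β F(z))` and `z = Π_K(z − β F(z̃))` with `βL < 1`, then `z̃ = z`
and `z = Π_K(z − β F(z))`. -/
theorem stmt_14
    (E : Type) [NormedAddCommGroup E] [InnerProductSpace ℝ E]
    [FiniteDimensional ℝ E]
    (K : Set E) (hKne : K.Nonempty) (hKcl : IsClosed K) (hKcv : Convex ℝ K)
    (proj : E → E)
    (hproj : ∀ u : E, proj u ∈ K ∧ ∀ w ∈ K, ‖u - proj u‖ ≤ ‖u - w‖)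
    (F : E → E) (L : ℝ) (hL : 0 ≤ L)
    (hLip : ∀ u ∈ K, ∀ v ∈ K, ‖F u - F v‖ ≤ L * ‖u - v‖)
    (β : ℝ) (hβ : 0 < β) (hβL : β * L < 1)
    (z ztil : E) (hz : z ∈ K) (hztil : ztil ∈ K)
    (h1 : ztil = proj (z - β • F z))
    (h2 : z = proj (z - β • F ztil)) :
    ztil = z ∧ z = proj (z - β • F z) := by
  -- variational inequality for proj
  have vi : ∀ u : E, ∀ w ∈ K, ⟪u - proj u, w - proj u⟫ ≤ 0 := by
    intro u w hw
    have hmem := (hproj u).1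
    have heq : ‖u - proj u‖ = ⨅ w : K, ‖u - w‖ := by
      haveI : Nonempty K := ⟨⟨proj u, hmem⟩⟩
      apply le_antisymm
      · exact le_ciInf fun w => (hproj u).2 w w.2
      · exact ciInf_le ⟨0, by rintro x ⟨w, rfl⟩; positivity⟩ (⟨proj u, hmem⟩ : K)
    exact (norm_eq_iInf_iff_real_inner_le_zero hKcv hmem).mp heq w hw
  -- VI for z = proj (z - β F ztil), test point ztil
  have hA : ⟪F ztil, ztil - z⟫ ≥ 0 := by
    have := vi (z - β • F ztil) ztil hztil
    rw [← h2] at this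
    have h' : z - β • F ztil - z = -(β • F ztil) := by abel
    rw [h', inner_neg_left, real_inner_smul_left] at this
    nlinarith
  -- VI for ztil = proj (z - β F z), test point z
  have hB : ‖z - ztil‖ ^ 2 ≤ β * ⟪F z, z - ztil⟫ := by
    have := vi (z - β • F z) z hz
    rw [← h1] at this
    have h' : z - β • F z - ztil = (z - ztil) - β • F z := by abel
    rw [h', inner_sub_left, real_inner_smul_left, real_inner_self_eq_norm_sq] at this
    linarith
  have key : ‖z - ztil‖ ^ 2 ≤ β * L * ‖z - ztil‖ ^ 2 := by
    have hsplit : ⟪F z, z - ztil⟫ =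
        ⟪F z - F ztil, z - ztil⟫ + ⟪F ztil, z - ztil⟫ := by
      rw [← inner_add_left, sub_add_cancel]
    have h2' : ⟪F ztil, z - ztil⟫ ≤ 0 := by
      have : z - ztil = -(ztil - z) := by abel
      rw [this, inner_neg_right]; linarith
    have hcs : ⟪F z - F ztil, z - ztil⟫ ≤ ‖F z - F ztil‖ * ‖z - ztil‖ :=
      real_inner_le_norm _ _
    have hlip := hLip z hz ztil hztil
    have hnn : (0:ℝ) ≤ ‖z - ztil‖ := norm_nonneg _
    have t1 : ‖F z - F ztil‖ * ‖z - ztil‖ ≤ L * ‖z - ztil‖ ^ 2 := by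
      nlinarith [mul_le_mul_of_nonneg_right hlip hnn]
    have t2 : ⟪F z, z - ztil⟫ ≤ L * ‖z - ztil‖ ^ 2 := by linarith
    nlinarith [mul_le_mul_of_nonneg_left t2 hβ.le]
  have hzz : z = ztil := by
    have hx : ‖z - ztil‖ = 0 := by
      by_contra h
      have hpos : 0 < ‖z - ztil‖ ^ 2 := by positivity
      nlinarith [mul_lt_mul_of_pos_right hβL hpos]
    exact norm_sub_eq_zero_iff.mp hx
  refine ⟨hzz.symm, ?_⟩
  rw [← hzz] at h1
  exact h1 ▸ rfl
end

section
/- One-step descent inequality for the extra-gradient method: let K be a nonempty closed convex subset of a finite-dimensional real inner product space, let F : K → E be monotone on K (⟨F(u) − F(v), u − v⟩ ≥ 0 for all u, v ∈ K) and L-Lipschitz on K, and let β > 0. Let z ∈ K, z̃ = Π_K(z − β F(z)), z⁺ = Π_K(z − β F(z̃)), and let z† ∈ K satisfy z† = Π_K(z† − β F(z†)). Then ‖z⁺ − z†‖² ≤ ‖z − z†‖² − (1 − β²L²)‖z − z̃‖². -/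
open scoped RealInnerProductSpace

/-- Variational characterization of the metric projection onto a convex set. -/
lemma proj_vi {E : Type} [NormedAddCommGroup E] [InnerProductSpace ℝ E]
    {K : Set E} (hKcv : Convex ℝ K) {proj : E → E}
    (hproj : ∀ u : E, proj u ∈ K ∧ ∀ w ∈ K, ‖u - proj u‖ ≤ ‖u - w‖)
    (u : E) : ∀ w ∈ K, ⟪u - proj u, w - proj u⟫ ≤ 0 := by
  have hmem := (hproj u).1
  have hmin := (hproj u).2
  have : Nonempty K := ⟨⟨proj u, hmem⟩⟩
  have heq : ‖u - proj u‖ = ⨅ w : K, ‖u - w‖ := by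
    apply le_antisymm
    · exact le_ciInf fun w => hmin w w.2
    · refine ciInf_le ?_ (⟨proj u, hmem⟩ : K)
      refine ⟨0, ?_⟩
      rintro x ⟨w, rfl⟩
      exact norm_nonneg _
  exact (norm_eq_iInf_iff_real_inner_le_zero hKcv hmem).1 heq

/-- One-step descent inequality for the extra-gradient method:
`‖z⁺ − z†‖² ≤ ‖z − z†‖² − (1 − β²L²)‖z − z̃‖²`. -/
theorem stmt_15
    (E : Type) [NormedAddCommGroup E] [InnerProductSpace ℝ E]
    [FiniteDimensional ℝ E]
    (K : Set E) (hKne : K.Nonempty) (hKcl : IsClosed K) (hKcv : Convex ℝ K)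
    (proj : E → E)
    (hproj : ∀ u : E, proj u ∈ K ∧ ∀ w ∈ K, ‖u - proj u‖ ≤ ‖u - w‖)
    (F : E → E) (L : ℝ) (hL : 0 ≤ L)
    (hmono : ∀ u ∈ K, ∀ v ∈ K, 0 ≤ ⟪F u - F v, u - v⟫)
    (hLip : ∀ u ∈ K, ∀ v ∈ K, ‖F u - F v‖ ≤ L * ‖u - v‖)
    (β : ℝ) (hβ : 0 < β)
    (z ztil zplus zdag : E)
    (hz : z ∈ K)
    (h1 : ztil = proj (z - β • F z))
    (h2 : zplus = proj (z - β • F ztil))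
    (hdagK : zdag ∈ K)
    (hdag : zdag = proj (zdag - β • F zdag)) :
    ‖zplus - zdag‖ ^ 2 ≤ ‖z - zdag‖ ^ 2 - (1 - β ^ 2 * L ^ 2) * ‖z - ztil‖ ^ 2 := by
  have hytilK : ztil ∈ K := h1 ▸ (hproj (z - β • F z)).1
  have hplusK : zplus ∈ K := h2 ▸ (hproj (z - β • F ztil)).1
  set a := z - zdag with ha
  set b := ztil - zdag with hb
  set c := zplus - zdag with hc
  set fz := F z
  set fy := F ztil
  set fd := F zdag
  -- P1 : projection inequality at zplus with w = zdag
  have P1 : ⟪z - β • fy - zplus, zdag - zplus⟫ ≤ 0 := by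
    have := proj_vi hKcv hproj (z - β • fy) zdag hdagK
    rwa [← h2] at this
  -- P2 : projection inequality at ztil with w = zplus
  have P2 : ⟪z - β • fz - ztil, zplus - ztil⟫ ≤ 0 := by
    have := proj_vi hKcv hproj (z - β • fz) zplus hplusK
    rwa [← h1] at this
  -- P3 : projection inequality at zdag with w = ztil
  have P3 : ⟪zdag - β • fd - zdag, ztil - zdag⟫ ≤ 0 := by
    have := proj_vi hKcv hproj (zdag - β • fd) ztil hytilK
    rwa [← hdag] at this
  have hfd : 0 ≤ ⟪fd, b⟫ := by
    have h : zdag - β • fd - zdag = (-β) • fd := by module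
    rw [h, real_inner_smul_left] at P3
    have : 0 ≤ β * ⟪fd, ztil - zdag⟫ := by nlinarith
    have := nonneg_of_mul_nonneg_right this hβ
    simpa [hb] using this
  have hfy : 0 ≤ ⟪fy, b⟫ := by
    have := hmono ztil hytilK zdag hdagK
    rw [inner_sub_left] at this
    simpa [hb] using by linarith
  -- rewrite P1 and P2 in terms of a b c
  have P1' : ⟪a, c⟫ - β * ⟪fy, c⟫ - ‖c‖ ^ 2 ≥ 0 := by
    have e1 : z - β • fy - zplus = (a - c) - β • fy := by
      simp only [ha, hc]; module
    have e2 : zdag - zplus = -c := by simp only [hc]; module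
    rw [e1, e2] at P1
    simp only [inner_neg_right, inner_sub_left, inner_sub_right, real_inner_smul_left,
      real_inner_self_eq_norm_sq] at P1
    linarith
  have P2' : ⟪a, c⟫ - ⟪a, b⟫ - β * ⟪fz, c⟫ + β * ⟪fz, b⟫ - ⟪b, c⟫ + ‖b‖ ^ 2 ≤ 0 := by
    have e1 : z - β • fz - ztil = (a - b) - β • fz := by
      simp only [ha, hb]; module
    have e2 : zplus - ztil = c - b := by simp only [hb, hc]; module
    rw [e1, e2] at P2
    simp only [inner_sub_left, inner_sub_right, real_inner_smul_left,
      real_inner_self_eq_norm_sq] at P2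
    linarith [real_inner_comm c b, real_inner_comm b a]
  -- Lipschitz / Cauchy-Schwarz bound
  have hcs : ⟪fz - fy, c - b⟫ ≤ L * ‖a - b‖ * ‖c - b‖ := by
    have h1' : ⟪fz - fy, c - b⟫ ≤ ‖fz - fy‖ * ‖c - b‖ := real_inner_le_norm _ _
    have h2' : ‖fz - fy‖ ≤ L * ‖z - ztil‖ := hLip z hz ztil hytilK
    have h3' : z - ztil = a - b := by simp only [ha, hb]; module
    rw [h3'] at h2'
    nlinarith [norm_nonneg (c - b)]
  have hamgm : 2 * β * (L * ‖a - b‖ * ‖c - b‖) ≤ β ^ 2 * L ^ 2 * ‖a - b‖ ^ 2 + ‖c - b‖ ^ 2 := by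
    nlinarith [sq_nonneg (β * L * ‖a - b‖ - ‖c - b‖)]
  -- norm expansions
  have hab : ‖a - b‖ ^ 2 = ‖a‖ ^ 2 - 2 * ⟪a, b⟫ + ‖b‖ ^ 2 := norm_sub_sq_real a b
  have hcb : ‖c - b‖ ^ 2 = ‖c‖ ^ 2 - 2 * ⟪c, b⟫ + ‖b‖ ^ 2 := norm_sub_sq_real c b
  have hcbcomm : ⟪c, b⟫ = ⟪b, c⟫ := real_inner_comm b c
  have hfzfy : ⟪fz - fy, c - b⟫ = ⟪fz, c⟫ - ⟪fz, b⟫ - ⟪fy, c⟫ + ⟪fy, b⟫ := by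
    simp only [inner_sub_left, inner_sub_right]; ring
  -- goal in terms of a b c
  have hgz : z - zdag = a := rfl
  have hgy : z - ztil = a - b := by simp only [ha, hb]; module
  have hgp : zplus - zdag = c := rfl
  rw [hgy]
  nlinarith [hβ.le, mul_nonneg hβ.le hfy]
end

section
/- Monotonicity of the distributed pseudo-gradient (key design claim behind Algorithm 2): the distributed pseudo-gradient F is monotone on the region where all local dual components are nonnegative, i.e., for all z = (x, σ) and z' = (x', σ') with σ^i_{ij} ≥ 0, σ'^i_{ij} ≥ 0 for all i ∈ S and (i,j) ∈ E_ss and σ^i_{il} ≥ 0, σ'^i_{il} ≥ 0 for all (i,l) ∈ E_as, one has ⟨F(z) − F(z'), z − z'⟩ ≥ 0. -/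
open scoped BigOperators RealInnerProductSpace

lemma sum_edges {α β M : Type*} [Fintype α] [Fintype β] [DecidableEq α] [DecidableEq β]
    [AddCommMonoid M] (E : Finset (α × β)) (f : α → β → M) :
    ∑ p ∈ E, f p.1 p.2 = ∑ i, ∑ j ∈ Finset.univ.filter (fun j => (i, j) ∈ E), f i j := by
  classical
  have hE : E = Finset.univ.filter (fun p => p ∈ E) := by ext p; simp
  rw [hE, Finset.sum_filter, Fintype.sum_prod_type]
  simp [Finset.sum_filter]

lemma key_ss {V : Type*} [NormedAddCommGroup V] [InnerProductSpace ℝ V]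
    (u u' : V) (s s' : ℝ) (h : 0 ≤ s + s') :
    0 ≤ ⟪s • u - s' • u', u - u'⟫
      + (-(1/2 * (‖u‖^2 - ‖u'‖^2)) + 1/8 * (s - s')) * (s - s') := by
  have hq : (0:ℝ) ≤ ‖u‖^2 - 2*⟪u, u'⟫ + ‖u'‖^2 := by
    have := sq_nonneg (‖u - u'‖)
    rw [norm_sub_sq_real] at this
    linarith
  simp only [real_inner_comm u' u] at hq
  simp only [inner_sub_left, inner_sub_right, real_inner_smul_left,
    real_inner_self_eq_norm_sq, real_inner_comm u' u]
  nlinarith [mul_nonneg h hq, sq_nonneg (s - s')]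

lemma sum_swap {M : Type*} [AddCommMonoid M] {S : Type*} (Ess : Finset (S × S))
    (hsym : ∀ i j : S, (i, j) ∈ Ess → (j, i) ∈ Ess) (f : S → S → M) :
    ∑ p ∈ Ess, f p.1 p.2 = ∑ p ∈ Ess, f p.2 p.1 := by
  apply Finset.sum_nbij' (fun p => (p.2, p.1)) (fun p => (p.2, p.1)) <;>
    simp_all [Prod.forall]

lemma as_ineq {V : Type*} [NormedAddCommGroup V] [InnerProductSpace ℝ V]
    (xi xi' al : V) (σ σ' eil : ℝ) (hσ : 0 ≤ σ) (hσ' : 0 ≤ σ') :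
    0 ≤ ⟪(2 * σ) • (xi - al) - (2 * σ') • (xi' - al), xi - xi'⟫
      + (-((‖xi - al‖ ^ 2 - eil ^ 2) - 1/2 * σ) - -((‖xi' - al‖ ^ 2 - eil ^ 2) - 1/2 * σ')) * (σ - σ') := by
  set w := xi - al with hw
  set w' := xi' - al with hw'
  have hvv : xi - xi' = w - w' := by rw [hw, hw']; abel
  rw [hvv]
  have hq : (0:ℝ) ≤ ‖w‖^2 - 2*⟪w, w'⟫ + ‖w'‖^2 := by
    have := sq_nonneg (‖w - w'‖)
    rw [norm_sub_sq_real] at this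
    linarith
  simp only [real_inner_comm w' w] at hq
  simp only [inner_sub_left, inner_sub_right, real_inner_smul_left,
    real_inner_self_eq_norm_sq, real_inner_comm w' w]
  nlinarith [mul_nonneg (add_nonneg hσ hσ') hq, sq_nonneg (σ - σ')]

lemma pair_ineq {V : Type*} [NormedAddCommGroup V] [InnerProductSpace ℝ V]
    (xi xj xi' xj' : V) (sij sji sij' sji' dij dji : ℝ)
    (h : 0 ≤ sij + sji + (sij' + sji')) :
    0 ≤ ⟪(sij + sji) • (xi - xj) - (sij' + sji') • (xi' - xj'), xi - xi'⟫
      + ⟪(sji + sij) • (xj - xi) - (sji' + sij') • (xj' - xi'), xj - xj'⟫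
      + (-(1/2 * (‖xi - xj‖ ^ 2 - dij ^ 2) - 1/8 * (sij + sji))
          - -(1/2 * (‖xi' - xj'‖ ^ 2 - dij ^ 2) - 1/8 * (sij' + sji'))) * (sij - sij')
      + (-(1/2 * (‖xj - xi‖ ^ 2 - dji ^ 2) - 1/8 * (sji + sij))
          - -(1/2 * (‖xj' - xi'‖ ^ 2 - dji ^ 2) - 1/8 * (sji' + sij'))) * (sji - sji') := by
  have h1 : (sji + sij) • (xj - xi) - (sji' + sij') • (xj' - xi')
      = -((sij + sji) • (xi - xj) - (sij' + sji') • (xi' - xj')) := by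
    module
  rw [h1, inner_neg_left, norm_sub_rev xj xi, norm_sub_rev xj' xi']
  have h2 : ⟪(sij + sji) • (xi - xj) - (sij' + sji') • (xi' - xj'), xi - xi'⟫
      - ⟪(sij + sji) • (xi - xj) - (sij' + sji') • (xi' - xj'), xj - xj'⟫
      = ⟪(sij + sji) • (xi - xj) - (sij' + sji') • (xi' - xj'), (xi - xj) - (xi' - xj')⟫ := by
    rw [← inner_sub_right]
    congr 1
    abel
  have key := key_ss (xi - xj) (xi' - xj') (sij + sji) (sij' + sji') h
  set u := xi - xj
  set u' := xi' - xj'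
  nlinarith [key, h2]

/-- Monotonicity of the distributed pseudo-gradient `F` on the
region where all local dual components are nonnegative. -/
theorem stmt_17
    (n : ℕ) (hn : 1 ≤ n)
    (S A : Type) [Fintype S] [DecidableEq S] [Fintype A] [DecidableEq A]
    (a : A → EuclideanSpace ℝ (Fin n))
    (Ess : Finset (S × S))
    (hsym : ∀ i j : S, (i, j) ∈ Ess → (j, i) ∈ Ess)
    (hirr : ∀ i : S, (i, i) ∉ Ess)
    (Eas : Finset (S × A))
    (d : S → S → ℝ) (hd : ∀ i j, d i j = d j i)
    (e : S → A → ℝ)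
    -- the components of the distributed pseudo-gradient F(z)
    (Fx : (S → EuclideanSpace ℝ (Fin n)) → (S → S → ℝ) → (S → A → ℝ) →
      S → EuclideanSpace ℝ (Fin n))
    (hFx : ∀ x σs σa i, Fx x σs σa i =
      (∑ j ∈ Finset.univ.filter (fun j => (i, j) ∈ Ess),
        (σs i j + σs j i) • (x i - x j))
        + ∑ l ∈ Finset.univ.filter (fun l => (i, l) ∈ Eas),
            (2 * σa i l) • (x i - a l))
    (Fs : (S → EuclideanSpace ℝ (Fin n)) → (S → S → ℝ) → S → S → ℝ)
    (hFs : ∀ x σs i j, Fs x σs i j =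
      -((1 / 2) * (‖x i - x j‖ ^ 2 - d i j ^ 2) - (1 / 8) * (σs i j + σs j i)))
    (Fa : (S → EuclideanSpace ℝ (Fin n)) → (S → A → ℝ) → S → A → ℝ)
    (hFa : ∀ x σa i l, Fa x σa i l =
      -((‖x i - a l‖ ^ 2 - e i l ^ 2) - (1 / 2) * σa i l)) :
    -- monotonicity on the nonnegative dual region
    ∀ (x x' : S → EuclideanSpace ℝ (Fin n))
      (σs σs' : S → S → ℝ) (σa σa' : S → A → ℝ),
      (∀ p ∈ Ess, 0 ≤ σs p.1 p.2) → (∀ p ∈ Ess, 0 ≤ σs' p.1 p.2) →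
      (∀ q ∈ Eas, 0 ≤ σa q.1 q.2) → (∀ q ∈ Eas, 0 ≤ σa' q.1 q.2) →
      0 ≤ (∑ i : S, ⟪Fx x σs σa i - Fx x' σs' σa' i, x i - x' i⟫)
        + (∑ p ∈ Ess,
            (Fs x σs p.1 p.2 - Fs x' σs' p.1 p.2) * (σs p.1 p.2 - σs' p.1 p.2))
        + ∑ q ∈ Eas,
            (Fa x σa q.1 q.2 - Fa x' σa' q.1 q.2) * (σa q.1 q.2 - σa' q.1 q.2) := by
  intro x x' σs σs' σa σa' h1 h2 h3 h4
  -- per-edge terms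
  set P : S → S → ℝ := fun i j =>
    ⟪(σs i j + σs j i) • (x i - x j) - (σs' i j + σs' j i) • (x' i - x' j), x i - x' i⟫ with hP
  set B : S → A → ℝ := fun i l =>
    ⟪(2 * σa i l) • (x i - a l) - (2 * σa' i l) • (x' i - a l), x i - x' i⟫ with hB
  -- step 1: rewrite the x-part as sums over the edge sets
  have hsum1 : (∑ i : S, ⟪Fx x σs σa i - Fx x' σs' σa' i, x i - x' i⟫)
      = (∑ p ∈ Ess, P p.1 p.2) + ∑ q ∈ Eas, B q.1 q.2 := by
    rw [sum_edges Ess P, sum_edges Eas B, ← Finset.sum_add_distrib]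
    refine Finset.sum_congr rfl fun i _ => ?_
    rw [hFx, hFx, hP, hB]
    simp only [inner_sub_left, inner_add_left, sum_inner, real_inner_smul_left]
    rw [Finset.sum_sub_distrib, Finset.sum_sub_distrib]
    ring
  rw [hsum1]
  -- the anchor part
  have hA : 0 ≤ (∑ q ∈ Eas, B q.1 q.2)
      + ∑ q ∈ Eas, (Fa x σa q.1 q.2 - Fa x' σa' q.1 q.2) * (σa q.1 q.2 - σa' q.1 q.2) := by
    rw [← Finset.sum_add_distrib]
    refine Finset.sum_nonneg fun q hq => ?_
    rw [hB, hFa, hFa]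
    exact as_ineq (x q.1) (x' q.1) (a q.2) (σa q.1 q.2) (σa' q.1 q.2) (e q.1 q.2)
      (h3 q hq) (h4 q hq)
  -- the inter-node part
  have hS : 0 ≤ (∑ p ∈ Ess, P p.1 p.2)
      + ∑ p ∈ Ess, (Fs x σs p.1 p.2 - Fs x' σs' p.1 p.2) * (σs p.1 p.2 - σs' p.1 p.2) := by
    set f : S → S → ℝ := fun i j =>
      P i j + (Fs x σs i j - Fs x' σs' i j) * (σs i j - σs' i j) with hf
    have hcomb : (∑ p ∈ Ess, P p.1 p.2)
        + ∑ p ∈ Ess, (Fs x σs p.1 p.2 - Fs x' σs' p.1 p.2) * (σs p.1 p.2 - σs' p.1 p.2)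
        = ∑ p ∈ Ess, f p.1 p.2 := by
      rw [← Finset.sum_add_distrib]
    rw [hcomb]
    have hswap := sum_swap Ess hsym f
    have hdouble : 0 ≤ ∑ p ∈ Ess, (f p.1 p.2 + f p.2 p.1) := by
      refine Finset.sum_nonneg fun p hp => ?_
      have hp' : (p.2, p.1) ∈ Ess := hsym p.1 p.2 (by simpa using hp)
      have hn1 := h1 p hp
      have hn2 := h1 (p.2, p.1) hp'
      have hn3 := h2 p hp
      have hn4 := h2 (p.2, p.1) hp'
      simp only [hf, hP, hFs]
      have hpair := pair_ineq (x p.1) (x p.2) (x' p.1) (x' p.2)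
        (σs p.1 p.2) (σs p.2 p.1) (σs' p.1 p.2) (σs' p.2 p.1)
        (d p.1 p.2) (d p.2 p.1)
        (by linarith)
      linarith
    rw [Finset.sum_add_distrib, ← hswap] at hdouble
    linarith
  linarith
end
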